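/- arXiv:2405.19820 — 8 statements merged into one kernel-verified Lean document; each statement's English description precedes it below -/
import Mathlib

section
/- Let p be a prime and e ≥ 1. A subgroup K of M = (ℤ/p^eℤ)² is maximal isotropic with respect to the standard symplectic pairing ω if and only if K is isotropic and the cardinality of K equals p^e. -/
open AddSubgroup

namespace MaxIso

lemma card_ker_mul_card_range {G H : Type*} [AddGroup G] [AddGroup H] (f : G →+ H) :
    Nat.card f.ker * Nat.card f.range = Nat.card G := by
  rw [← Nat.card_congr (QuotientAddGroup.quotientKerEquivRange f).toEquiv, mul_comm,
    ← AddSubgroup.card_eq_card_quotient_mul_card_addSubgroup]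

variable {n : ℕ} [NeZero n]

lemma range_mulLeft (c : ZMod n) : (AddMonoidHom.mulLeft c).range = zmultiples c := by
  ext x
  simp only [AddMonoidHom.mem_range, AddMonoidHom.coe_mulLeft, mem_zmultiples_iff]
  constructor
  · rintro ⟨w, rfl⟩
    obtain ⟨k, rfl⟩ := ZMod.intCast_surjective w
    exact ⟨k, by simp [zsmul_eq_mul]; ring⟩
  · rintro ⟨k, rfl⟩
    exact ⟨(k : ZMod n), by simp [zsmul_eq_mul]; ring⟩

lemma card_ker_mulLeft (c : ZMod n) :
    Nat.card (AddMonoidHom.mulLeft c).ker * addOrderOf c = n := by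
  have h := card_ker_mul_card_range (AddMonoidHom.mulLeft c)
  rwa [range_mulLeft, Nat.card_zmultiples, Nat.card_zmod] at h

lemma zmultiples_eq_ker (a : ZMod n) :
    zmultiples a = (AddMonoidHom.mulLeft ((addOrderOf a : ℕ) : ZMod n)).ker := by
  have hdvd : addOrderOf a ∣ n := by
    have := addOrderOf_dvd_natCard a
    rwa [Nat.card_zmod] at this
  have hn : n ≠ 0 := NeZero.ne n
  have hs : addOrderOf a ≠ 0 := by
    have : 0 < addOrderOf a := addOrderOf_pos a
    omega
  refine AddSubgroup.eq_of_le_of_card_ge ?_ ?_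
  · rintro x hx
    obtain ⟨k, rfl⟩ := mem_zmultiples_iff.mp hx
    show ((addOrderOf a : ℕ) : ZMod n) * (k • a) = 0
    rw [zsmul_eq_mul]
    have hsa : ((addOrderOf a : ℕ) : ZMod n) * a = 0 := by
      rw [← nsmul_eq_mul, addOrderOf_nsmul_eq_zero]
    calc ((addOrderOf a : ℕ) : ZMod n) * ((k : ZMod n) * a)
        = (k : ZMod n) * (((addOrderOf a : ℕ) : ZMod n) * a) := by ring
      _ = 0 := by rw [hsa, mul_zero]
  · have h1 : Nat.card (AddMonoidHom.mulLeft ((addOrderOf a : ℕ) : ZMod n)).ker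
        * addOrderOf ((addOrderOf a : ℕ) : ZMod n) = n := card_ker_mulLeft _
    have h2 : addOrderOf ((addOrderOf a : ℕ) : ZMod n) = n / addOrderOf a := by
      rw [ZMod.addOrderOf_coe _ hn, Nat.gcd_eq_right hdvd]
    rw [Nat.card_zmultiples]
    rw [h2] at h1
    have h3 : n / addOrderOf a ≠ 0 := by
      intro h; rw [h, mul_zero] at h1; exact hn h1.symm
    have : Nat.card (AddMonoidHom.mulLeft ((addOrderOf a : ℕ) : ZMod n)).ker = addOrderOf a := by
      have h4 : n / addOrderOf a * addOrderOf a = n := Nat.div_mul_cancel hdvd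
      have h5 : Nat.card (AddMonoidHom.mulLeft ((addOrderOf a : ℕ) : ZMod n)).ker * (n / addOrderOf a)
          = addOrderOf a * (n / addOrderOf a) := by
        rw [h1, mul_comm (addOrderOf a), h4]
      exact Nat.eq_of_mul_eq_mul_right (Nat.pos_of_ne_zero h3) h5
    omega

omit [NeZero n] in
lemma exists_gen (H : AddSubgroup (ZMod n)) : ∃ a, a ∈ H ∧ zmultiples a = H := by
  obtain ⟨g, hg⟩ := IsAddCyclic.exists_generator (α := H)
  refine ⟨(g : ZMod n), g.2, le_antisymm ?_ ?_⟩
  · rintro x hx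
    obtain ⟨k, rfl⟩ := mem_zmultiples_iff.mp hx
    exact zsmul_mem g.2 k
  · intro x hx
    obtain ⟨k, hk⟩ := hg ⟨x, hx⟩
    exact mem_zmultiples_iff.mpr ⟨k, by simpa using congrArg Subtype.val hk⟩

def psi (x₀ : ZMod n × ZMod n) (d : ZMod n) : (ZMod n × ZMod n) →+ (ZMod n × ZMod n) :=
  AddMonoidHom.mk' (fun y => (x₀.1 * y.2 - x₀.2 * y.1, d * y.1)) (by
    intro y z
    simp only [Prod.fst_add, Prod.snd_add, Prod.mk_add_mk, Prod.mk.injEq]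
    constructor <;> ring)

omit [NeZero n] in
@[simp] lemma psi_apply (x₀ : ZMod n × ZMod n) (d : ZMod n) (y : ZMod n × ZMod n) :
    psi x₀ d y = (x₀.1 * y.2 - x₀.2 * y.1, d * y.1) := rfl

lemma key (K : AddSubgroup (ZMod n × ZMod n))
    (hiso : ∀ x ∈ K, ∀ y ∈ K, x.1 * y.2 - x.2 * y.1 = 0) :
    ∃ x₀ ∈ K, ∃ d : ZMod n, ((0 : ZMod n), d) ∈ K ∧
      (∀ x ∈ K, ∃ k m : ℤ, x = k • x₀ + m • (((0 : ZMod n), d) : ZMod n × ZMod n)) ∧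
      Nat.card K ∣ n ∧
      Nat.card K * Nat.card (psi x₀ d).ker = n ^ 2 ∧
      K ≤ (psi x₀ d).ker := by
  classical
  set f : K →+ ZMod n := (AddMonoidHom.fst (ZMod n) (ZMod n)).comp K.subtype with hf
  obtain ⟨a, haR, haz⟩ := exists_gen f.range
  obtain ⟨xk, hxk⟩ := AddMonoidHom.mem_range.mp haR
  set x₀ : ZMod n × ZMod n := (xk : ZMod n × ZMod n) with hx₀
  have hx₀K : x₀ ∈ K := xk.2
  have hx₀1 : x₀.1 = a := hxk
  set H₂ : AddSubgroup (ZMod n) := K.comap (AddMonoidHom.inr (ZMod n) (ZMod n)) with hH₂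
  have memH₂ : ∀ y : ZMod n, y ∈ H₂ ↔ ((0 : ZMod n), y) ∈ K := fun y => Iff.rfl
  obtain ⟨d, hdH, hdz⟩ := exists_gen H₂
  have hd0K : ((0 : ZMod n), d) ∈ K := (memH₂ d).mp hdH
  set s := addOrderOf a with hsdef
  set t := addOrderOf d with htdef
  -- basic facts
  have had : a * d = 0 := by
    have h := hiso x₀ hx₀K _ hd0K
    simpa [hx₀1] using h
  have hrange : Nat.card f.range = s := by rw [← haz, Nat.card_zmultiples]
  have hcardH₂ : Nat.card H₂ = t := by rw [← hdz, Nat.card_zmultiples]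
  have hc : Nat.card f.ker = Nat.card H₂ := by
    refine Nat.card_congr
      ⟨fun x => ⟨((x.1 : K) : ZMod n × ZMod n).2, ?_⟩,
       fun y => ⟨⟨(((0 : ZMod n), (y : ZMod n)) : ZMod n × ZMod n), (memH₂ _).mp y.2⟩, ?_⟩,
       ?_, ?_⟩
    · rw [memH₂]
      have h1 : ((x.1 : K) : ZMod n × ZMod n).1 = 0 := x.2
      have h2 : (((0 : ZMod n), ((x.1 : K) : ZMod n × ZMod n).2) : ZMod n × ZMod n)
          = ((x.1 : K) : ZMod n × ZMod n) := Prod.ext h1.symm rfl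
      rw [h2]
      exact (x.1 : K).2
    · exact AddMonoidHom.mem_ker.mpr rfl
    · intro x
      apply Subtype.ext; apply Subtype.ext
      have h1 : ((x.1 : K) : ZMod n × ZMod n).1 = 0 := x.2
      exact Prod.ext h1.symm rfl
    · intro y
      rfl
  have hcardK : Nat.card K = t * s := by
    rw [← card_ker_mul_card_range f, hrange, hc, hcardH₂]
  -- generation
  have hgen : ∀ x ∈ K, ∃ k m : ℤ, x = k • x₀ + m • (((0 : ZMod n), d) : ZMod n × ZMod n) := by
    intro x hx
    have hx1 : x.1 ∈ zmultiples a := by rw [haz]; exact ⟨⟨x, hx⟩, rfl⟩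
    obtain ⟨k, hk⟩ := mem_zmultiples_iff.mp hx1
    have hyK : x - k • x₀ ∈ K := K.sub_mem hx (K.zsmul_mem hx₀K k)
    have hy1 : (x - k • x₀).1 = 0 := by
      have : (x - k • x₀).1 = x.1 - k • x₀.1 := rfl
      rw [this, hx₀1, hk, sub_self]
    have hy2 : (x - k • x₀).2 ∈ H₂ := by
      rw [memH₂]
      have h2 : (((0 : ZMod n), (x - k • x₀).2) : ZMod n × ZMod n) = x - k • x₀ :=
        Prod.ext hy1.symm rfl
      rw [h2]; exact hyK
    rw [← hdz] at hy2
    obtain ⟨m, hm⟩ := mem_zmultiples_iff.mp hy2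
    refine ⟨k, m, ?_⟩
    have hsm : m • (((0 : ZMod n), d) : ZMod n × ZMod n) = ((0 : ZMod n), m • d) := by
      ext <;> simp
    rw [hsm, hm]
    refine Prod.ext ?_ ?_
    · show x.1 = k • x₀.1 + 0
      rw [hx₀1, hk, add_zero]
    · show x.2 = k • x₀.2 + (x.2 - k • x₀.2)
      ring
  -- divisibility
  have hled : zmultiples d ≤ (AddMonoidHom.mulLeft a).ker := by
    rintro z hz
    obtain ⟨k, rfl⟩ := mem_zmultiples_iff.mp hz
    show a * (k • d) = 0
    rw [zsmul_eq_mul]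
    calc a * ((k : ZMod n) * d) = (k : ZMod n) * (a * d) := by ring
      _ = 0 := by rw [had, mul_zero]
  have htdvd : t ∣ Nat.card (AddMonoidHom.mulLeft a).ker := by
    have h := AddSubgroup.card_dvd_of_le hled
    rwa [Nat.card_zmultiples] at h
  have hdvdn : Nat.card K ∣ n := by
    rw [hcardK]
    calc t * s ∣ Nat.card (AddMonoidHom.mulLeft a).ker * s := Nat.mul_dvd_mul_right htdvd s
      _ = n := card_ker_mulLeft a
  -- (s : ZMod n) * b is a multiple of d
  have hsx₀ : ((s : ℕ) : ZMod n) * x₀.2 ∈ zmultiples d := by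
    have h1 : s • x₀ ∈ K := K.nsmul_mem hx₀K s
    have h2 : (s • x₀).1 = 0 := by
      have hh : (s • x₀).1 = s • x₀.1 := rfl
      rw [hh, hx₀1]
      exact addOrderOf_nsmul_eq_zero a
    have h3 : (s • x₀).2 ∈ H₂ := by
      rw [memH₂]
      have hh : (((0 : ZMod n), (s • x₀).2) : ZMod n × ZMod n) = s • x₀ := Prod.ext h2.symm rfl
      rw [hh]; exact h1
    rw [← hdz] at h3
    have hh : (s • x₀).2 = ((s : ℕ) : ZMod n) * x₀.2 := by
      have : (s • x₀).2 = s • x₀.2 := rfl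
      rw [this, nsmul_eq_mul]
    rwa [hh] at h3
  -- the perp group
  set g : (psi x₀ d).ker →+ ZMod n :=
    (AddMonoidHom.fst (ZMod n) (ZMod n)).comp (psi x₀ d).ker.subtype with hg
  have hgrange : g.range = (AddMonoidHom.mulLeft d).ker := by
    ext u
    constructor
    · rintro ⟨y, rfl⟩
      show d * ((y : ZMod n × ZMod n)).1 = 0
      have hy := AddMonoidHom.mem_ker.mp y.2
      exact congrArg Prod.snd hy
    · intro hu
      have hu' : d * u = 0 := hu
      have hbu : x₀.2 * u ∈ zmultiples a := by
        rw [zmultiples_eq_ker]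
        show ((addOrderOf a : ℕ) : ZMod n) * (x₀.2 * u) = 0
        obtain ⟨k, hk⟩ := mem_zmultiples_iff.mp hsx₀
        calc ((addOrderOf a : ℕ) : ZMod n) * (x₀.2 * u)
            = (((s : ℕ) : ZMod n) * x₀.2) * u := by ring
          _ = (k • d) * u := by rw [hk]
          _ = (k : ZMod n) * (d * u) := by rw [zsmul_eq_mul]; ring
          _ = 0 := by rw [hu', mul_zero]
      obtain ⟨m, hm⟩ := mem_zmultiples_iff.mp hbu
      have h1 : x₀.1 * (m : ZMod n) - x₀.2 * u = 0 := by
        rw [hx₀1, ← hm, zsmul_eq_mul]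
        ring
      refine ⟨⟨((u, (m : ZMod n)) : ZMod n × ZMod n), ?_⟩, rfl⟩
      show psi x₀ d ((u, (m : ZMod n)) : ZMod n × ZMod n) = 0
      rw [psi_apply]
      exact Prod.ext h1 hu'
  have hgker : Nat.card g.ker = Nat.card (AddMonoidHom.mulLeft a).ker := by
    refine Nat.card_congr
      ⟨fun x => ⟨(((x.1 : (psi x₀ d).ker) : ZMod n × ZMod n)).2, ?_⟩,
       fun v => ⟨⟨(((0 : ZMod n), (v : ZMod n)) : ZMod n × ZMod n), ?_⟩, ?_⟩,
       ?_, ?_⟩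
    · show a * (((x.1 : (psi x₀ d).ker) : ZMod n × ZMod n)).2 = 0
      have hfst : (((x.1 : (psi x₀ d).ker) : ZMod n × ZMod n)).1 = 0 := x.2
      have hker := AddMonoidHom.mem_ker.mp (x.1 : (psi x₀ d).ker).2
      have h1 := congrArg Prod.fst hker
      simp only [psi_apply] at h1
      rw [hx₀1, hfst, mul_zero, sub_zero] at h1
      exact h1
    · show psi x₀ d (((0 : ZMod n), (v : ZMod n)) : ZMod n × ZMod n) = 0
      rw [psi_apply]
      refine Prod.ext ?_ ?_
      · show x₀.1 * (v : ZMod n) - x₀.2 * 0 = 0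
        have hv : a * (v : ZMod n) = 0 := v.2
        rw [hx₀1, mul_zero, sub_zero, hv]
      · show d * 0 = 0
        rw [mul_zero]
    · exact AddMonoidHom.mem_ker.mpr rfl
    · intro x
      apply Subtype.ext; apply Subtype.ext
      have hfst : (((x.1 : (psi x₀ d).ker) : ZMod n × ZMod n)).1 = 0 := x.2
      exact Prod.ext hfst.symm rfl
    · intro v
      rfl
  have hcardP : Nat.card (psi x₀ d).ker
      = Nat.card (AddMonoidHom.mulLeft a).ker * Nat.card (AddMonoidHom.mulLeft d).ker := by
    rw [← card_ker_mul_card_range g, hgrange, hgker]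
  have hprod : Nat.card K * Nat.card (psi x₀ d).ker = n ^ 2 := by
    rw [hcardK, hcardP, pow_two]
    calc t * s * (Nat.card (AddMonoidHom.mulLeft a).ker * Nat.card (AddMonoidHom.mulLeft d).ker)
        = (Nat.card (AddMonoidHom.mulLeft a).ker * s)
          * (Nat.card (AddMonoidHom.mulLeft d).ker * t) := by ring
      _ = n * n := by rw [card_ker_mulLeft, card_ker_mulLeft]
  have hKP : K ≤ (psi x₀ d).ker := by
    intro x hx
    show psi x₀ d x = 0
    have h1 := hiso x₀ hx₀K x hx
    have h2 := hiso _ hd0K x hx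
    simp only [zero_mul, zero_sub, neg_eq_zero] at h2
    rw [psi_apply]
    exact Prod.ext h1 h2
  exact ⟨x₀, hx₀K, d, hd0K, hgen, hdvdn, hprod, hKP⟩


end MaxIso

/-- A subgroup `K` of `(ℤ/p^eℤ)²` is maximal isotropic for the standard symplectic pairing
`ω((a,b),(c,d)) = ad - bc` if and only if it is isotropic and has cardinality exactly `p^e`. -/
theorem maximal_isotropic_iff_card (p : ℕ) (hp : p.Prime) (e : ℕ) (he : 1 ≤ e)
    (K : AddSubgroup (ZMod (p ^ e) × ZMod (p ^ e))) :
    ((∀ x ∈ K, ∀ y ∈ K, x.1 * y.2 - x.2 * y.1 = 0) ∧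
      ∀ K' : AddSubgroup (ZMod (p ^ e) × ZMod (p ^ e)),
        (∀ x ∈ K', ∀ y ∈ K', x.1 * y.2 - x.2 * y.1 = 0) → K ≤ K' → K' = K) ↔
    ((∀ x ∈ K, ∀ y ∈ K, x.1 * y.2 - x.2 * y.1 = 0) ∧ Nat.card K = p ^ e) := by
  haveI : NeZero (p ^ e) := ⟨pow_ne_zero e hp.pos.ne'⟩
  have hnpos : 0 < p ^ e := pow_pos hp.pos e
  constructor
  · rintro ⟨hiso, hmax⟩
    refine ⟨hiso, ?_⟩
    obtain ⟨x₀, hx₀K, d, hdK, hgen, hdvd, hcard, hKP⟩ := MaxIso.key K hiso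
    by_contra hne
    have hlt : Nat.card K < p ^ e := lt_of_le_of_ne (Nat.le_of_dvd hnpos hdvd) hne
    have hK0 : 0 < Nat.card K := Nat.card_pos
    have hPK : Nat.card K < Nat.card (MaxIso.psi x₀ d).ker := by
      by_contra hle
      push_neg at hle
      nlinarith [hcard, hlt, hK0]
    have hnotle : ¬ ((MaxIso.psi x₀ d).ker ≤ K) := by
      intro hle
      exact absurd (AddSubgroup.card_le_of_le hle) (by omega)
    obtain ⟨y, hyP, hyK⟩ := SetLike.not_le_iff_exists.mp hnotle
    have hyP' := AddMonoidHom.mem_ker.mp hyP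
    rw [MaxIso.psi_apply] at hyP'
    have h1 : x₀.1 * y.2 - x₀.2 * y.1 = 0 := congrArg Prod.fst hyP'
    have h2 : d * y.1 = 0 := congrArg Prod.snd hyP'
    have hyK0 : ∀ x ∈ K, x.1 * y.2 - x.2 * y.1 = 0 := by
      intro x hx
      obtain ⟨k, m, rfl⟩ := hgen x hx
      simp only [Prod.fst_add, Prod.snd_add, Prod.smul_fst, Prod.smul_snd]
      simp only [zsmul_eq_mul]
      linear_combination (k : ZMod (p ^ e)) * h1 - (m : ZMod (p ^ e)) * h2
    have hK'iso : ∀ u ∈ K ⊔ AddSubgroup.zmultiples y, ∀ v ∈ K ⊔ AddSubgroup.zmultiples y,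
        u.1 * v.2 - u.2 * v.1 = 0 := by
      intro u hu v hv
      rw [AddSubgroup.mem_sup] at hu hv
      obtain ⟨xu, hxu, wu, hwu, rfl⟩ := hu
      obtain ⟨xv, hxv, wv, hwv, rfl⟩ := hv
      obtain ⟨k, rfl⟩ := AddSubgroup.mem_zmultiples_iff.mp hwu
      obtain ⟨m, rfl⟩ := AddSubgroup.mem_zmultiples_iff.mp hwv
      have ha := hiso xu hxu xv hxv
      have hb := hyK0 xu hxu
      have hc := hyK0 xv hxv
      simp only [Prod.fst_add, Prod.snd_add, Prod.smul_fst, Prod.smul_snd]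
      simp only [zsmul_eq_mul]
      linear_combination ha + (m : ZMod (p ^ e)) * hb - (k : ZMod (p ^ e)) * hc
    have hKeq : K ⊔ AddSubgroup.zmultiples y = K := hmax _ hK'iso le_sup_left
    have hyK2 : y ∈ K := by
      rw [← hKeq]
      exact AddSubgroup.mem_sup_right (AddSubgroup.mem_zmultiples y)
    exact hyK hyK2
  · rintro ⟨hiso, hcardK⟩
    refine ⟨hiso, fun K' hiso' hle => ?_⟩
    obtain ⟨x₀, hx₀K, d, hdK, hgen, hdvd, hcard, hKP⟩ := MaxIso.key K hiso
    have hPcard : Nat.card (MaxIso.psi x₀ d).ker = p ^ e := by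
      rw [hcardK] at hcard
      have h := hcard
      rw [pow_two] at h
      exact Nat.eq_of_mul_eq_mul_left hnpos h
    have hKeq : K = (MaxIso.psi x₀ d).ker :=
      AddSubgroup.eq_of_le_of_card_ge hKP (by rw [hPcard, hcardK])
    refine le_antisymm ?_ hle
    intro x hx
    rw [hKeq]
    show MaxIso.psi x₀ d x = 0
    rw [MaxIso.psi_apply]
    have h1 := hiso' x₀ (hle hx₀K) x hx
    have h2 := hiso' _ (hle hdK) x hx
    simp only [zero_mul, zero_sub, neg_eq_zero] at h2
    exact Prod.ext h1 h2
end

section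
/- Let p be a prime and e ≥ 1, and let K be any subgroup of M = (ℤ/p^eℤ)². Then the cardinality of K equals the product over j = 0, …, e−1 of the cardinalities of the p-torsion subgroups of p^j·K; that is, |K| = ∏_{j=0}^{e−1} |{x ∈ p^j·K : p·x = 0}|. -/
/-!
Multiplication by `p` maps `p^j • K` onto `p^(j+1) • K` with kernel the `p`-torsion of
`p^j • K`, so `|p^j • K| = |(p^j • K)[p]| · |p^(j+1) • K|`. Telescoping from `j = 0` to `j = e`,
where `p^e • K = 0`, gives the product formula.
-/

namespace AddSubgroup

variable {M : Type*} [AddCommGroup M]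

theorem card_eq_card_torsion_mul_card_map_nsmul (H : AddSubgroup M) (n : ℕ) :
    Nat.card H = Nat.card {x | x ∈ H ∧ n • x = 0} * Nat.card (H.map (nsmulAddMonoidHom n)) := by
  let f := (nsmulAddMonoidHom (α := M) n).domRestrict H
  rw [← f.ker.card_mul_index, index_ker, AddMonoidHom.domRestrict_range]
  congr 1
  exact Nat.card_congr
    ⟨fun x => ⟨x.1.1, x.1.2, x.2⟩, fun x => ⟨⟨x.1, x.2.1⟩, x.2.2⟩, fun _ => rfl, fun _ => rfl⟩

theorem map_nsmul_map_nsmul (H : AddSubgroup M) (m n : ℕ) :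
    (H.map (nsmulAddMonoidHom m)).map (nsmulAddMonoidHom n) = H.map (nsmulAddMonoidHom (n * m)) := by
  rw [map_map]
  congr 1
  ext x
  simp [mul_smul]

theorem map_nsmul_one (H : AddSubgroup M) : H.map (nsmulAddMonoidHom 1) = H := by
  convert H.map_id
  ext x
  simp

theorem card_eq_prod_card_torsion_map_nsmul_pow (p : ℕ) {e : ℕ} {K : AddSubgroup M}
    (hK : ∀ x ∈ K, p ^ e • x = 0) :
    Nat.card K = ∏ j ∈ Finset.range e,
      Nat.card {x | x ∈ K.map (nsmulAddMonoidHom (p ^ j)) ∧ p • x = 0} := by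
  induction e generalizing K with
  | zero =>
    have : K = ⊥ := (eq_bot_iff_forall K).2 fun x hx => by simpa using hK x hx
    simp [this]
  | succ e ih =>
    have hpK : ∀ x ∈ K.map (nsmulAddMonoidHom p), p ^ e • x = 0 := by
      rintro _ ⟨y, hy, rfl⟩
      simpa [← mul_smul, ← pow_succ] using hK y hy
    rw [card_eq_card_torsion_mul_card_map_nsmul K p, ih hpK, Finset.prod_range_succ', mul_comm]
    simp only [map_nsmul_map_nsmul, ← pow_succ, pow_zero, map_nsmul_one]

end AddSubgroup

theorem card_eq_prod_card_torsion_general (p : ℕ) (e : ℕ)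
    (K : AddSubgroup (ZMod (p ^ e) × ZMod (p ^ e))) :
    Nat.card K = ∏ j ∈ Finset.range e,
      Nat.card {x : ZMod (p ^ e) × ZMod (p ^ e) |
        (∃ y ∈ K, p ^ j • y = x) ∧ p • x = 0} :=
  AddSubgroup.card_eq_prod_card_torsion_map_nsmul_pow p fun x _ =>
    ZModModule.char_nsmul_eq_zero (p ^ e) x

/-- For any subgroup `K` of `M = (ℤ/p^eℤ)²`, the cardinality of `K` is the product over
`j = 0, …, e-1` of the cardinalities of the `p`-torsion subgroups of `p^j·K`. -/
theorem card_eq_prod_card_torsion (p : ℕ) (hp : p.Prime) (e : ℕ) (he : 1 ≤ e)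
    (K : AddSubgroup (ZMod (p ^ e) × ZMod (p ^ e))) :
    Nat.card K = ∏ j ∈ Finset.range e,
      Nat.card {x : ZMod (p ^ e) × ZMod (p ^ e) |
        (∃ y ∈ K, p ^ j • y = x) ∧ p • x = 0} :=
  card_eq_prod_card_torsion_general p e K
end

section
/- Let p be a prime and e ≥ 1, and let K be an isotropic subgroup of M = (ℤ/p^eℤ)² with respect to the standard symplectic pairing ω. Then for every 0 ≤ j ≤ e−1, the product |{x ∈ p^j·K : p·x = 0}| · |{x ∈ p^{e−1−j}·K : p·x = 0}| is at most p². -/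
namespace CardTorsionAux

variable {p e : ℕ}


variable {p e : ℕ}

lemma keydvd (hp : p.Prime) {k : ℕ} (hk : k ≤ e) (x : ZMod (p ^ e))
    (h : (p : ZMod (p ^ e)) ^ k * x = 0) :
    ∃ y : ZMod (p ^ e), x = (p : ZMod (p ^ e)) ^ (e - k) * y := by
  haveI : NeZero (p ^ e) := ⟨pow_ne_zero e hp.pos.ne'⟩
  have h1 : ((p ^ k * x.val : ℕ) : ZMod (p ^ e)) = 0 := by
    push_cast
    rw [ZMod.natCast_val, ZMod.cast_id]
    exact h
  rw [ZMod.natCast_eq_zero_iff] at h1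
  have h2 : p ^ (e - k) ∣ x.val := by
    have h3 : p ^ k * p ^ (e - k) ∣ p ^ k * x.val := by
      rw [← pow_add, Nat.add_sub_cancel' hk]; exact h1
    exact (mul_dvd_mul_iff_left (pow_ne_zero k hp.pos.ne')).mp h3
  obtain ⟨c, hc⟩ := h2
  refine ⟨(c : ZMod (p ^ e)), ?_⟩
  calc x = ((x.val : ℕ) : ZMod (p ^ e)) := by rw [ZMod.natCast_val, ZMod.cast_id]
    _ = _ := by rw [hc]; push_cast; ring

lemma keycast (hp : p.Prime) (he : 1 ≤ e) (hdvd : p ∣ p ^ e) (t : ZMod (p ^ e))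
    (h : (p : ZMod (p ^ e)) ^ (e - 1) * t = 0) :
    ZMod.castHom hdvd (ZMod p) t = 0 := by
  obtain ⟨y, hy⟩ := keydvd hp (Nat.sub_le e 1) t h
  have h1 : e - (e - 1) = 1 := by omega
  rw [hy, h1, pow_one, map_mul, map_natCast, ZMod.natCast_self, zero_mul]

lemma pepow_zero (he : 1 ≤ e) : (p : ZMod (p ^ e)) ^ (e - 1) * p = 0 := by
  have h : (p : ZMod (p ^ e)) ^ (e - 1) * p = (p : ZMod (p ^ e)) ^ e := by
    rw [← pow_succ]; congr 1; omega
  rw [h, ← Nat.cast_pow, ZMod.natCast_self]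

noncomputable def gmap (p e : ℕ) (he : 1 ≤ e) : ZMod p →+ ZMod (p ^ e) :=
  ZMod.lift p ⟨(AddMonoidHom.mulLeft ((p : ZMod (p ^ e)) ^ (e - 1))).comp (Int.castAddHom _), by
    simp only [AddMonoidHom.coe_comp, Function.comp_apply, Int.coe_castAddHom,
      AddMonoidHom.coe_mulLeft, Int.cast_natCast]
    exact pepow_zero he⟩

lemma gmap_apply (hp : p ≠ 0) (he : 1 ≤ e) (c : ZMod p) :
    gmap p e he c = (p : ZMod (p ^ e)) ^ (e - 1) * (c.val : ZMod (p ^ e)) := by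
  haveI : NeZero p := ⟨hp⟩
  have h1 : c = (((c.val : ℕ) : ℤ) : ZMod p) := by
    push_cast
    rw [ZMod.natCast_val, ZMod.cast_id]
  conv_lhs => rw [h1]
  rw [gmap, ZMod.lift_coe]
  simp [AddMonoidHom.coe_comp, Int.coe_castAddHom, AddMonoidHom.coe_mulLeft]

lemma gmap_injective (hp : p.Prime) (he : 1 ≤ e) :
    Function.Injective (gmap p e he) := by
  haveI : NeZero p := ⟨hp.pos.ne'⟩
  haveI : NeZero (p ^ e) := ⟨pow_ne_zero e hp.pos.ne'⟩
  rw [injective_iff_map_eq_zero]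
  intro c hc
  rw [gmap_apply hp.pos.ne' he] at hc
  have h1 : ((p ^ (e - 1) * c.val : ℕ) : ZMod (p ^ e)) = 0 := by push_cast; exact hc
  rw [ZMod.natCast_eq_zero_iff] at h1
  have h2 : p ^ (e - 1) * p ∣ p ^ (e - 1) * c.val := by
    have h : p ^ (e - 1) * p = p ^ e := by rw [← pow_succ]; congr 1; omega
    rw [h]; exact h1
  have h3 : p ∣ c.val := (mul_dvd_mul_iff_left (pow_ne_zero _ hp.pos.ne')).mp h2
  have h4 : c.val = 0 := Nat.eq_zero_of_dvd_of_lt h3 (ZMod.val_lt c)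
  exact (ZMod.val_eq_zero c).mp h4

lemma gmap_surj_on_torsion (hp : p.Prime) (he : 1 ≤ e) (x : ZMod (p ^ e))
    (h : (p : ZMod (p ^ e)) * x = 0) : ∃ c : ZMod p, gmap p e he c = x := by
  haveI : NeZero (p ^ e) := ⟨pow_ne_zero e hp.pos.ne'⟩
  haveI : NeZero p := ⟨hp.pos.ne'⟩
  obtain ⟨y, hy⟩ := keydvd hp he x (by rw [pow_one]; exact h)
  refine ⟨((y.val % p : ℕ) : ZMod p), ?_⟩
  rw [gmap_apply hp.pos.ne' he, ZMod.val_natCast, Nat.mod_mod_of_dvd _ dvd_rfl, hy]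
  have hsplit : (y.val : ℕ) = p * (y.val / p) + y.val % p := (Nat.div_add_mod _ _).symm
  have hy2 : y = ((y.val : ℕ) : ZMod (p ^ e)) := by rw [ZMod.natCast_val, ZMod.cast_id]
  conv_rhs => rw [hy2, hsplit]
  push_cast
  ring_nf
  have hz : (p : ZMod (p^e)) * (p : ZMod (p^e)) ^ (e-1) * ((y.val / p : ℕ) : ZMod (p^e)) = 0 := by
    rw [mul_comm (p : ZMod (p^e)), pepow_zero he, zero_mul]
  rw [hz, zero_add]




def ST (p e m : ℕ) (K : AddSubgroup (ZMod (p ^ e) × ZMod (p ^ e))) :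
    AddSubgroup (ZMod (p ^ e) × ZMod (p ^ e)) where
  carrier := {x | (∃ y ∈ K, m • y = x) ∧ p • x = 0}
  zero_mem' := ⟨⟨0, K.zero_mem, smul_zero m⟩, smul_zero p⟩
  add_mem' := by
    rintro a b ⟨⟨y1, hy1, h1⟩, t1⟩ ⟨⟨y2, hy2, h2⟩, t2⟩
    exact ⟨⟨y1 + y2, K.add_mem hy1 hy2, by rw [smul_add, h1, h2]⟩,
      by rw [smul_add, t1, t2, add_zero]⟩
  neg_mem' := by
    rintro a ⟨⟨y, hy, h1⟩, t⟩
    exact ⟨⟨-y, K.neg_mem hy, by rw [smul_neg, h1]⟩, by rw [smul_neg, t, neg_zero]⟩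

lemma final_card (hp : p.Prime) (A B : AddSubgroup (ZMod p × ZMod p))
    (h : ∀ a ∈ A, ∀ b ∈ B, a.1 * b.2 - a.2 * b.1 = 0) :
    Nat.card A * Nat.card B ≤ p ^ 2 := by
  haveI : Fact p.Prime := ⟨hp⟩
  have hcard : Nat.card (ZMod p × ZMod p) = p ^ 2 := by
    rw [Nat.card_prod, Nat.card_zmod]; ring
  have hA : Nat.card A ∣ p ^ 2 := hcard ▸ AddSubgroup.card_addSubgroup_dvd_card A
  have hB : Nat.card B ∣ p ^ 2 := hcard ▸ AddSubgroup.card_addSubgroup_dvd_card B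
  obtain ⟨i, hi, hAi⟩ := (Nat.dvd_prime_pow hp).mp hA
  obtain ⟨k, hk, hBk⟩ := (Nat.dvd_prime_pow hp).mp hB
  by_cases hA2 : Nat.card A = p ^ 2
  · have hAtop : A = ⊤ := AddSubgroup.eq_top_of_card_eq A (hA2.trans hcard.symm)
    have hBbot : B = ⊥ := by
      rw [AddSubgroup.eq_bot_iff_forall]
      intro b hb
      have h1 := h (1, 0) (by rw [hAtop]; trivial) b hb
      have h2 := h (0, 1) (by rw [hAtop]; trivial) b hb
      simp only [one_mul, zero_mul, sub_zero, zero_sub, neg_eq_zero] at h1 h2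
      exact Prod.ext h2 h1
    rw [hA2, hBbot, AddSubgroup.card_bot, mul_one]
  · by_cases hB2 : Nat.card B = p ^ 2
    · have hBtop : B = ⊤ := AddSubgroup.eq_top_of_card_eq B (hB2.trans hcard.symm)
      have hAbot : A = ⊥ := by
        rw [AddSubgroup.eq_bot_iff_forall]
        intro a ha
        have h1 := h a ha (1, 0) (by rw [hBtop]; trivial)
        have h2 := h a ha (0, 1) (by rw [hBtop]; trivial)
        simp only [one_mul, zero_mul, mul_one, mul_zero, zero_sub, sub_zero, neg_eq_zero] at h1 h2
        exact Prod.ext h2 h1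
      rw [hB2, hAbot, AddSubgroup.card_bot, one_mul]
    · have hi1 : i ≤ 1 := by
        rcases Nat.lt_or_ge i 2 with h' | h'
        · omega
        · exfalso; exact hA2 (by rw [hAi]; congr 1; omega)
      have hk1 : k ≤ 1 := by
        rcases Nat.lt_or_ge k 2 with h' | h'
        · omega
        · exfalso; exact hB2 (by rw [hBk]; congr 1; omega)
      rw [hAi, hBk, ← pow_add]
      exact Nat.pow_le_pow_right hp.pos (by omega)


lemma ST_mem {m : ℕ} {K : AddSubgroup (ZMod (p ^ e) × ZMod (p ^ e))}
    {x : ZMod (p ^ e) × ZMod (p ^ e)} :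
    x ∈ ST p e m K ↔ (∃ y ∈ K, m • y = x) ∧ p • x = 0 := Iff.rfl
lemma pi_eq (hp : p.Prime) (he : 1 ≤ e) (hdvd : p ∣ p ^ e) (c : ZMod p) (w : ZMod (p ^ e))
    (hw : (p : ZMod (p ^ e)) ^ (e - 1) * w = gmap p e he c) :
    ZMod.castHom hdvd (ZMod p) w = c := by
  haveI : NeZero p := ⟨hp.pos.ne'⟩
  have h0 : (p : ZMod (p ^ e)) ^ (e - 1) * (w - (c.val : ZMod (p ^ e))) = 0 := by
    rw [mul_sub, hw, gmap_apply hp.pos.ne' he, sub_self]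
  have h1 := keycast hp he hdvd _ h0
  rw [map_sub, sub_eq_zero] at h1
  rw [h1, map_natCast, ZMod.natCast_val, ZMod.cast_id]

lemma nsmul_fst_eq {m : ℕ} {x y : ZMod (p ^ e) × ZMod (p ^ e)} (h : m • x = y) :
    (m : ZMod (p ^ e)) * x.1 = y.1 := by
  have := congrArg Prod.fst h
  rw [Prod.smul_fst, nsmul_eq_mul] at this
  exact this

lemma nsmul_snd_eq {m : ℕ} {x y : ZMod (p ^ e) × ZMod (p ^ e)} (h : m • x = y) :
    (m : ZMod (p ^ e)) * x.2 = y.2 := by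
  have := congrArg Prod.snd h
  rw [Prod.smul_snd, nsmul_eq_mul] at this
  exact this

lemma perp (hp : p.Prime) (he : 1 ≤ e) (hdvd : p ∣ p ^ e) {j k : ℕ}
    (hj : j + 1 ≤ e) (hk : k + 1 ≤ e) (hjk : j + k = e - 1)
    (K : AddSubgroup (ZMod (p ^ e) × ZMod (p ^ e)))
    (hiso : ∀ x ∈ K, ∀ y ∈ K, x.1 * y.2 - x.2 * y.1 = 0)
    (a b : ZMod p × ZMod p)
    (ha : ((gmap p e he).prodMap (gmap p e he)) a ∈ ST p e (p ^ j) K)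
    (hb : ((gmap p e he).prodMap (gmap p e he)) b ∈ ST p e (p ^ k) K) :
    a.1 * b.2 - a.2 * b.1 = 0 := by
  set q : ZMod (p ^ e) := (p : ZMod (p ^ e)) with hq
  obtain ⟨⟨u, hu, hau⟩, ha0⟩ := ST_mem.mp ha
  obtain ⟨⟨v, hv, hbv⟩, hb0⟩ := ST_mem.mp hb
  -- component equations
  have hau1 : q ^ j * u.1 = gmap p e he a.1 := by
    have := nsmul_fst_eq hau; rw [Nat.cast_pow] at this; exact this
  have hau2 : q ^ j * u.2 = gmap p e he a.2 := by
    have := nsmul_snd_eq hau; rw [Nat.cast_pow] at this; exact this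
  have hbv1 : q ^ k * v.1 = gmap p e he b.1 := by
    have := nsmul_fst_eq hbv; rw [Nat.cast_pow] at this; exact this
  have hbv2 : q ^ k * v.2 = gmap p e he b.2 := by
    have := nsmul_snd_eq hbv; rw [Nat.cast_pow] at this; exact this
  have ha01 : q * gmap p e he a.1 = 0 := nsmul_fst_eq ha0
  have ha02 : q * gmap p e he a.2 = 0 := nsmul_snd_eq ha0
  have hb01 : q * gmap p e he b.1 = 0 := nsmul_fst_eq hb0
  have hb02 : q * gmap p e he b.2 = 0 := nsmul_snd_eq hb0
  -- torsion bounds on u, v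
  have hu1 : q ^ (j + 1) * u.1 = 0 := by
    rw [pow_succ, mul_comm (q ^ j) q, mul_assoc, hau1, ha01]
  have hu2 : q ^ (j + 1) * u.2 = 0 := by
    rw [pow_succ, mul_comm (q ^ j) q, mul_assoc, hau2, ha02]
  have hv1 : q ^ (k + 1) * v.1 = 0 := by
    rw [pow_succ, mul_comm (q ^ k) q, mul_assoc, hbv1, hb01]
  have hv2 : q ^ (k + 1) * v.2 = 0 := by
    rw [pow_succ, mul_comm (q ^ k) q, mul_assoc, hbv2, hb02]
  obtain ⟨u1, hu1'⟩ := keydvd hp hj u.1 hu1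
  obtain ⟨u2, hu2'⟩ := keydvd hp hj u.2 hu2
  obtain ⟨v1, hv1'⟩ := keydvd hp hk v.1 hv1
  obtain ⟨v2, hv2'⟩ := keydvd hp hk v.2 hv2
  -- the symplectic product of lifts is killed by q^(e-1)
  have hio := hiso u hu v hv
  rw [hu1', hu2', hv1', hv2'] at hio
  have hee : (e - (j + 1)) + (e - (k + 1)) = e - 1 := by omega
  have h0 : q ^ (e - 1) * (u1 * v2 - u2 * v1) = 0 := by
    rw [← hee, pow_add]
    linear_combination hio
  have hπ := keycast hp he hdvd _ h0
  rw [map_sub, map_mul, map_mul, sub_eq_zero] at hπ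
  -- identify casts
  set π := ZMod.castHom hdvd (ZMod p)
  have hea1 : π u1 = a.1 := by
    apply pi_eq hp he hdvd
    rw [← hau1, hu1', ← mul_assoc, ← pow_add]
    congr 2
    omega
  have hea2 : π u2 = a.2 := by
    apply pi_eq hp he hdvd
    rw [← hau2, hu2', ← mul_assoc, ← pow_add]
    congr 2
    omega
  have heb1 : π v1 = b.1 := by
    apply pi_eq hp he hdvd
    rw [← hbv1, hv1', ← mul_assoc, ← pow_add]
    congr 2
    omega
  have heb2 : π v2 = b.2 := by
    apply pi_eq hp he hdvd
    rw [← hbv2, hv2', ← mul_assoc, ← pow_add]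
    congr 2
    omega
  rw [← hea1, ← hea2, ← heb1, ← heb2, hπ, sub_self]


end CardTorsionAux


/-- If `K` is an isotropic subgroup of `M = (ℤ/p^eℤ)²` for the standard symplectic pairing,
then for every `0 ≤ j ≤ e-1`, the product of the cardinalities of the `p`-torsion subgroups of
`p^j·K` and of `p^(e-1-j)·K` is at most `p²`. -/
theorem card_torsion_mul_card_torsion_le (p : ℕ) (hp : p.Prime) (e : ℕ) (he : 1 ≤ e)
    (K : AddSubgroup (ZMod (p ^ e) × ZMod (p ^ e)))
    (hiso : ∀ x ∈ K, ∀ y ∈ K, x.1 * y.2 - x.2 * y.1 = 0) :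
    ∀ j < e,
      Nat.card {x : ZMod (p ^ e) × ZMod (p ^ e) |
          (∃ y ∈ K, p ^ j • y = x) ∧ p • x = 0} *
        Nat.card {x : ZMod (p ^ e) × ZMod (p ^ e) |
          (∃ y ∈ K, p ^ (e - 1 - j) • y = x) ∧ p • x = 0} ≤ p ^ 2 := by
  intro j hj
  have hdvd : p ∣ p ^ e := dvd_pow_self p (by omega)
  set Φ := (CardTorsionAux.gmap p e he).prodMap (CardTorsionAux.gmap p e he) with hΦdef
  have hΦinj : Function.Injective Φ := by
    rw [hΦdef, AddMonoidHom.coe_prodMap]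
    exact (CardTorsionAux.gmap_injective hp he).prodMap (CardTorsionAux.gmap_injective hp he)
  have cardeq : ∀ m : ℕ,
      Nat.card {x : ZMod (p ^ e) × ZMod (p ^ e) | (∃ y ∈ K, m • y = x) ∧ p • x = 0} =
        Nat.card ((CardTorsionAux.ST p e m K).comap Φ) := by
    intro m
    have hsub : ((CardTorsionAux.ST p e m K : Set (ZMod (p ^ e) × ZMod (p ^ e)))) ⊆
        Set.range Φ := by
      rintro x ⟨-, hx0⟩
      have h1 : (p : ZMod (p ^ e)) * x.1 = 0 := CardTorsionAux.nsmul_fst_eq hx0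
      have h2 : (p : ZMod (p ^ e)) * x.2 = 0 := CardTorsionAux.nsmul_snd_eq hx0
      obtain ⟨c1, hc1⟩ := CardTorsionAux.gmap_surj_on_torsion hp he x.1 h1
      obtain ⟨c2, hc2⟩ := CardTorsionAux.gmap_surj_on_torsion hp he x.2 h2
      exact ⟨(c1, c2), by
        rw [hΦdef]
        simp only [AddMonoidHom.coe_prodMap, Prod.map_apply, hc1, hc2]⟩
    calc Nat.card {x : ZMod (p ^ e) × ZMod (p ^ e) | (∃ y ∈ K, m • y = x) ∧ p • x = 0}
        = Nat.card ((CardTorsionAux.ST p e m K : Set (ZMod (p ^ e) × ZMod (p ^ e)))) := rfl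
      _ = Nat.card (Φ '' (Φ ⁻¹' (CardTorsionAux.ST p e m K : Set (ZMod (p ^ e) × ZMod (p ^ e))))) := by
          rw [Set.image_preimage_eq_of_subset hsub]
      _ = Nat.card (Φ ⁻¹' (CardTorsionAux.ST p e m K : Set (ZMod (p ^ e) × ZMod (p ^ e)))) :=
          Nat.card_image_of_injective hΦinj _
      _ = Nat.card ((CardTorsionAux.ST p e m K).comap Φ) := rfl
  rw [cardeq, cardeq]
  apply CardTorsionAux.final_card hp
  intro a ha b hb
  rw [AddSubgroup.mem_comap] at ha hb
  exact CardTorsionAux.perp hp he hdvd (by omega) (by omega) (by omega) K hiso a b ha hb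
end

section
/- Let p be a prime and e ≥ 1, and let K be a maximal isotropic subgroup of M = (ℤ/p^eℤ)² with respect to the standard symplectic pairing ω. Then there exists an integer m with 0 ≤ m and 2m ≤ e such that for every 0 ≤ j ≤ e−1, the cardinality of the p-torsion subgroup of p^j·K equals p² if j < m, equals p if m ≤ j < e−m, and equals 1 if j ≥ e−m. -/
/-!
Write `T j` for the `p`-torsion of `p ^ j • K`. Multiplication by `p` maps `p ^ j • K` onto
`p ^ (j + 1) • K` with kernel `T j`, so the orders `|T j|` for `j < e` multiply to `|K|`, and
`|K| = p ^ e`: maximality forces `K ∩ (0 × R)` to be the whole annihilator of the first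
projection of `K`, and `|A| · |ann A| = |R|` in `R = ZMod (p ^ e)`. Each `|T j|` is `p ^ t j`
with `t j ≤ 2`, as `T j` lies in the `p`-torsion of `R²`, and `t` is antitone. A non-increasing
sequence in `{0, 1, 2}` of length `e` with sum `e` has as many `2`s as `0`s; `m` is their number.
-/

open Finset Pointwise

theorem Antitone.lt_card_filter_le_iff {t : ℕ → ℕ} (ht : Antitone t) {c e j : ℕ} (hj : j < e) :
    j < #{i ∈ range e | c ≤ t i} ↔ c ≤ t j := by
  constructor
  · intro hlt
    by_contra! hc
    have hsub : {i ∈ range e | c ≤ t i} ⊆ range j := fun i hi => by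
      rw [mem_filter] at hi
      by_contra! hji
      exact absurd (hi.2.trans (ht (by simpa using hji))) hc.not_ge
    exact absurd (card_le_card hsub) (by simpa using hlt.not_ge)
  · intro hc
    have hsub : range (j + 1) ⊆ {i ∈ range e | c ≤ t i} := fun i hi => by
      rw [mem_range] at hi
      exact mem_filter.2 ⟨mem_range.2 (by omega), hc.trans (ht (by omega))⟩
    simpa using card_le_card hsub

theorem sum_eq_card_filter_add_card_filter {t : ℕ → ℕ} (ht : ∀ j, t j ≤ 2) (s : Finset ℕ) :
    ∑ j ∈ s, t j = #{j ∈ s | 1 ≤ t j} + #{j ∈ s | 2 ≤ t j} := by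
  rw [card_filter, card_filter, ← sum_add_distrib]
  refine sum_congr rfl fun j _ => ?_
  have := ht j
  split_ifs <;> omega

theorem Antitone.exists_profile_of_sum_eq {t : ℕ → ℕ} {e : ℕ} (ht : Antitone t)
    (ht2 : ∀ j, t j ≤ 2) (hsum : ∑ j ∈ range e, t j = e) :
    ∃ m, 2 * m ≤ e ∧ ∀ j < e,
      (j < m → t j = 2) ∧ (m ≤ j → j < e - m → t j = 1) ∧ (e - m ≤ j → t j = 0) := by
  set a := #{j ∈ range e | 1 ≤ t j}
  set b := #{j ∈ range e | 2 ≤ t j}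
  have hab : a + b = e := by rw [← hsum, sum_eq_card_filter_add_card_filter ht2]
  have hba : b ≤ a := card_le_card (monotone_filter_right _ fun _ _ h => by omega)
  refine ⟨b, by omega, fun j hj => ?_⟩
  have h1 := ht.lt_card_filter_le_iff (c := 1) hj
  have h2 := ht.lt_card_filter_le_iff (c := 2) hj
  have := ht2 j
  refine ⟨fun _ => ?_, fun _ _ => ?_, fun _ => ?_⟩
  · have := h2.1 (by omega); omega
  · have := h1.1 (by omega); have := mt h2.2 (by omega); omega
  · have := mt h1.2 (by omega); omega

namespace AddSubgroup

variable {G G' : Type*} [AddCommGroup G] [AddCommGroup G']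

theorem card_inf_ker_mul_card_map (H : AddSubgroup G) (f : G →+ G') :
    Nat.card ↥(H ⊓ f.ker) * Nat.card ↥(H.map f) = Nat.card H := by
  let g := f.comp H.subtype
  have hrange : g.range = H.map f := by rw [AddMonoidHom.range_comp, range_subtype]
  have hker : Nat.card g.ker = Nat.card ↥(H ⊓ f.ker) :=
    Nat.card_congr
      { toFun := fun x => ⟨x.1, x.1.2, x.2⟩
        invFun := fun x => ⟨⟨x.1, x.2.1⟩, x.2.2⟩
        left_inv := fun _ => rfl
        right_inv := fun _ => rfl }
  rw [← hker, ← hrange, ← index_ker, card_mul_index]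

theorem card_inf_torsionBy_mul_card_nsmul (H : AddSubgroup G) (n : ℕ) :
    Nat.card ↥(H ⊓ torsionBy G n) * Nat.card ↥(n • H) = Nat.card H := by
  have hker : torsionBy G n = (DistribSMul.toAddMonoidHom G n).ker := by
    ext x
    rw [torsionBy.nsmul_iff, AddMonoidHom.mem_ker, DistribSMul.toAddMonoidHom_apply]
  rw [hker]
  exact card_inf_ker_mul_card_map H _

theorem pointwise_nsmul_le (H : AddSubgroup G) (n : ℕ) : n • H ≤ H := by
  rintro _ ⟨x, hx, rfl⟩
  exact nsmul_mem hx n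

theorem card_eq_prod_card_torsionBy_mul_card (H : AddSubgroup G) (n k : ℕ) :
    Nat.card H =
      (∏ j ∈ range k, Nat.card ↥(n ^ j • H ⊓ torsionBy G n)) * Nat.card ↥(n ^ k • H) := by
  induction k with
  | zero => simp
  | succ k ih =>
    rw [ih, prod_range_succ, mul_assoc, ← card_inf_torsionBy_mul_card_nsmul (n ^ k • H) n,
      smul_smul, ← pow_succ']

theorem card_inf_torsionBy_pow_succ_nsmul_le [Finite G] (H : AddSubgroup G) (n j : ℕ) :
    Nat.card ↥(n ^ (j + 1) • H ⊓ torsionBy G n) ≤ Nat.card ↥(n ^ j • H ⊓ torsionBy G n) := by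
  rw [pow_succ', ← smul_smul]
  exact card_le_of_le (inf_le_inf_right _ (pointwise_nsmul_le _ n))

theorem coe_nsmul_inf_torsionBy (H : AddSubgroup G) (n k : ℕ) :
    ((n • H ⊓ torsionBy G k : AddSubgroup G) : Set G) = {x | (∃ y ∈ H, n • y = x) ∧ k • x = 0} := by
  ext x
  rw [SetLike.mem_coe, mem_inf, mem_smul_pointwise_iff_exists, torsionBy.nsmul_iff]
  rfl

theorem card_eq_card_map_fst_mul_card_comap_inr (K : AddSubgroup (G × G')) :
    Nat.card K =
      Nat.card (K.map (AddMonoidHom.fst G G')) * Nat.card (K.comap (AddMonoidHom.inr G G')) := by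
  rw [← card_inf_ker_mul_card_map K (AddMonoidHom.fst G G'), mul_comm]
  congr 1
  have mem_iff {x : G × G'} (hx : x.1 = 0) :
      x ∈ K ↔ x.2 ∈ K.comap (AddMonoidHom.inr G G') := by
    rw [mem_comap, AddMonoidHom.inr_apply, ← hx]
  exact Nat.card_congr
    { toFun := fun x => ⟨x.1.2, (mem_iff x.2.2).1 x.2.1⟩
      invFun := fun z => ⟨(0, z.1), (mem_iff rfl).2 z.2, rfl⟩
      left_inv := fun x => Subtype.ext (Prod.ext x.2.2.symm rfl)
      right_inv := fun _ => rfl }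

theorem card_torsionBy_prod_le [Finite G] [IsAddCyclic G] {n : ℕ} (hn : 0 < n) :
    Nat.card (torsionBy (G × G) n) ≤ n ^ 2 := by
  classical
  have : Fintype G := Fintype.ofFinite G
  have hcyc : Nat.card {a : G // n • a = 0} ≤ n := by
    rw [Nat.card_eq_fintype_card, Fintype.card_subtype]
    exact IsAddCyclic.card_nsmul_eq_zero_le hn
  calc Nat.card (torsionBy (G × G) n)
      = Nat.card ({a : G // n • a = 0} × {b : G // n • b = 0}) :=
        Nat.card_congr <| (Equiv.subtypeEquivRight fun x => by
          rw [torsionBy.nsmul_iff, Prod.ext_iff]; rfl).trans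
          (Equiv.subtypeProdEquivProd)
    _ ≤ n ^ 2 := by rw [Nat.card_prod, sq]; exact Nat.mul_le_mul hcyc hcyc

end AddSubgroup

namespace ZMod

theorem card_mul_card_eq_of_mem_iff_mul_eq_zero {n : ℕ} [NeZero n]
    (A B : AddSubgroup (ZMod n))
    (hB : ∀ b, b ∈ B ↔ ∀ a ∈ A, a * b = 0) : Nat.card A * Nat.card B = n := by
  obtain ⟨g, rfl⟩ := (AddSubgroup.isAddCyclic_iff_exists_zmultiples_eq_top A).1 inferInstance
  have hrange : (AddMonoidHom.mulLeft g).range = AddSubgroup.zmultiples g := by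
    ext x
    rw [AddMonoidHom.mem_range, AddSubgroup.mem_zmultiples_iff]
    constructor
    · rintro ⟨r, rfl⟩
      obtain ⟨k, rfl⟩ := intCast_surjective r
      exact ⟨k, by rw [zsmul_eq_mul, mul_comm]; rfl⟩
    · rintro ⟨k, rfl⟩
      exact ⟨k, by rw [zsmul_eq_mul, mul_comm]; rfl⟩
  have hker : ⊤ ⊓ (AddMonoidHom.mulLeft g).ker = B := by
    ext b
    rw [top_inf_eq, AddMonoidHom.mem_ker, AddMonoidHom.coe_mulLeft, hB]
    constructor
    · rintro hgb _ ⟨k, rfl⟩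
      rw [smul_mul_assoc, hgb, smul_zero]
    · exact fun h => h g (AddSubgroup.mem_zmultiples g)
  rw [mul_comm, ← hker, ← hrange, AddMonoidHom.range_eq_map,
    AddSubgroup.card_inf_ker_mul_card_map, AddSubgroup.card_top, Nat.card_zmod]

end ZMod

section Isotropic

variable {R : Type*} [CommRing R]

def IsIsotropic (K : AddSubgroup (R × R)) : Prop :=
  ∀ x ∈ K, ∀ y ∈ K, x.1 * y.2 - x.2 * y.1 = 0

def IsMaximalIsotropic (K : AddSubgroup (R × R)) : Prop :=
  IsIsotropic K ∧ ∀ K' : AddSubgroup (R × R), IsIsotropic K' → K ≤ K' → K' = K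

theorem IsIsotropic.sup_zmultiples {K : AddSubgroup (R × R)} (hK : IsIsotropic K) {b : R}
    (hb : ∀ a ∈ K.map (AddMonoidHom.fst R R), a * b = 0) :
    IsIsotropic (K ⊔ AddSubgroup.zmultiples (0, b)) := by
  have hb' : ∀ y ∈ K, y.1 * b = 0 := fun y hy => hb _ ⟨y, hy, rfl⟩
  rintro _ hx' _ hy'
  obtain ⟨x, hx, _, ⟨k, rfl⟩, rfl⟩ := AddSubgroup.mem_sup.1 hx'
  obtain ⟨y, hy, _, ⟨l, rfl⟩, rfl⟩ := AddSubgroup.mem_sup.1 hy'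
  simp only [Prod.smul_mk, smul_zero, Prod.fst_add, Prod.snd_add, add_zero, zsmul_eq_mul]
  linear_combination hK x hx y hy + l * hb' x hx - k * hb' y hy

theorem IsMaximalIsotropic.mem_comap_inr_iff {K : AddSubgroup (R × R)}
    (hK : IsMaximalIsotropic K) (b : R) :
    b ∈ K.comap (AddMonoidHom.inr R R) ↔ ∀ a ∈ K.map (AddMonoidHom.fst R R), a * b = 0 := by
  constructor
  · rintro hb _ ⟨x, hx, rfl⟩
    simpa using hK.1 x hx _ hb
  · intro hb
    have hsup := hK.2 _ (hK.1.sup_zmultiples hb) le_sup_left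
    show (0, b) ∈ K
    rw [← hsup]
    exact AddSubgroup.mem_sup_right (AddSubgroup.mem_zmultiples _)

end Isotropic

theorem IsMaximalIsotropic.card_eq {n : ℕ} [NeZero n] {K : AddSubgroup (ZMod n × ZMod n)}
    (hK : IsMaximalIsotropic K) : Nat.card K = n := by
  rw [AddSubgroup.card_eq_card_map_fst_mul_card_comap_inr]
  exact ZMod.card_mul_card_eq_of_mem_iff_mul_eq_zero _ _ hK.mem_comap_inr_iff

theorem exists_card_inf_torsionBy_eq_pow {p e : ℕ} (hp : p.Prime)
    (H : AddSubgroup (ZMod (p ^ e) × ZMod (p ^ e))) :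
    ∃ t ≤ 2, Nat.card ↥(H ⊓ AddSubgroup.torsionBy _ p) = p ^ t := by
  have : NeZero (p ^ e) := ⟨pow_ne_zero e hp.ne_zero⟩
  have hdvd : Nat.card ↥(H ⊓ AddSubgroup.torsionBy _ p) ∣ p ^ (e + e) := by
    have := AddSubgroup.card_addSubgroup_dvd_card (H ⊓ AddSubgroup.torsionBy _ p)
    rwa [Nat.card_prod, Nat.card_zmod, ← pow_add] at this
  obtain ⟨t, -, ht⟩ := (Nat.dvd_prime_pow hp).1 hdvd
  refine ⟨t, (Nat.pow_le_pow_iff_right hp.one_lt).1 ?_, ht⟩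
  rw [← ht]
  exact (AddSubgroup.card_le_of_le inf_le_right).trans
    (AddSubgroup.card_torsionBy_prod_le hp.pos)

theorem torsion_profile_of_maximal_isotropic_general (p : ℕ) (hp : p.Prime) (e : ℕ)
    (K : AddSubgroup (ZMod (p ^ e) × ZMod (p ^ e)))
    (hiso : ∀ x ∈ K, ∀ y ∈ K, x.1 * y.2 - x.2 * y.1 = 0)
    (hmax : ∀ K' : AddSubgroup (ZMod (p ^ e) × ZMod (p ^ e)),
      (∀ x ∈ K', ∀ y ∈ K', x.1 * y.2 - x.2 * y.1 = 0) → K ≤ K' → K' = K) :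
    ∃ m : ℕ, 2 * m ≤ e ∧ ∀ j < e,
      (j < m →
        Nat.card {x : ZMod (p ^ e) × ZMod (p ^ e) |
          (∃ y ∈ K, p ^ j • y = x) ∧ p • x = 0} = p ^ 2) ∧
      (m ≤ j → j < e - m →
        Nat.card {x : ZMod (p ^ e) × ZMod (p ^ e) |
          (∃ y ∈ K, p ^ j • y = x) ∧ p • x = 0} = p) ∧
      (e - m ≤ j →
        Nat.card {x : ZMod (p ^ e) × ZMod (p ^ e) |
          (∃ y ∈ K, p ^ j • y = x) ∧ p • x = 0} = 1) := by
  have : NeZero (p ^ e) := ⟨pow_ne_zero e hp.ne_zero⟩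
  choose t ht2 ht using fun j => exists_card_inf_torsionBy_eq_pow hp (p ^ j • K)
  have hanti : Antitone t := antitone_nat_of_succ_le fun j =>
    (Nat.pow_le_pow_iff_right hp.one_lt).1 <| by
      rw [← ht, ← ht]
      exact AddSubgroup.card_inf_torsionBy_pow_succ_nsmul_le K p j
  have hbot : p ^ e • K = ⊥ :=
    eq_bot_iff.2 fun _ ⟨y, _, hy⟩ => hy ▸ ZModModule.char_nsmul_eq_zero _ y
  have hsum : ∑ j ∈ range e, t j = e := Nat.pow_right_injective hp.two_le <|
    calc p ^ ∑ j ∈ range e, t j = ∏ j ∈ range e, p ^ t j := (prod_pow_eq_pow_sum ..).symm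
      _ = Nat.card K := by
        rw [AddSubgroup.card_eq_prod_card_torsionBy_mul_card K p e, hbot,
          AddSubgroup.card_bot, mul_one]
        simp only [ht]
      _ = p ^ e := IsMaximalIsotropic.card_eq ⟨hiso, hmax⟩
  obtain ⟨m, hm, hprofile⟩ := hanti.exists_profile_of_sum_eq ht2 hsum
  have hcard (j : ℕ) : Nat.card {x : ZMod (p ^ e) × ZMod (p ^ e) |
      (∃ y ∈ K, p ^ j • y = x) ∧ p • x = 0} = p ^ t j := by
    rw [← AddSubgroup.coe_nsmul_inf_torsionBy]
    exact ht j
  refine ⟨m, hm, fun j hj => ?_⟩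
  obtain ⟨h2, h1, h0⟩ := hprofile j hj
  simp only [hcard]
  exact ⟨fun h => by rw [h2 h], fun h h' => by rw [h1 h h', pow_one],
    fun h => by rw [h0 h, pow_zero]⟩

/-- If `K` is a maximal isotropic subgroup of `M = (ℤ/p^eℤ)²` for the standard symplectic
pairing, then there is an integer `m` with `2m ≤ e` such that the `p`-torsion subgroup of
`p^j·K` has cardinality `p²` for `j < m`, `p` for `m ≤ j < e - m`, and `1` for `j ≥ e - m`. -/
theorem torsion_profile_of_maximal_isotropic (p : ℕ) (hp : p.Prime) (e : ℕ) (he : 1 ≤ e)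
    (K : AddSubgroup (ZMod (p ^ e) × ZMod (p ^ e)))
    (hiso : ∀ x ∈ K, ∀ y ∈ K, x.1 * y.2 - x.2 * y.1 = 0)
    (hmax : ∀ K' : AddSubgroup (ZMod (p ^ e) × ZMod (p ^ e)),
      (∀ x ∈ K', ∀ y ∈ K', x.1 * y.2 - x.2 * y.1 = 0) → K ≤ K' → K' = K) :
    ∃ m : ℕ, 2 * m ≤ e ∧ ∀ j < e,
      (j < m →
        Nat.card {x : ZMod (p ^ e) × ZMod (p ^ e) |
          (∃ y ∈ K, p ^ j • y = x) ∧ p • x = 0} = p ^ 2) ∧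
      (m ≤ j → j < e - m →
        Nat.card {x : ZMod (p ^ e) × ZMod (p ^ e) |
          (∃ y ∈ K, p ^ j • y = x) ∧ p • x = 0} = p) ∧
      (e - m ≤ j →
        Nat.card {x : ZMod (p ^ e) × ZMod (p ^ e) |
          (∃ y ∈ K, p ^ j • y = x) ∧ p • x = 0} = 1) :=
  torsion_profile_of_maximal_isotropic_general p hp e K hiso hmax
end

section
/- Let p be a prime and e ≥ 1, and let K be a maximal isotropic subgroup of M = (ℤ/p^eℤ)² with respect to the standard symplectic pairing ω. Then there exist an integer m with 0 ≤ m and 2m ≤ e and an element x ∈ M such that K is the subgroup generated by the p^m-torsion subgroup {y ∈ M : p^m·y = 0} together with x. In particular, K contains the full p^m-torsion subgroup of M, and the quotient of K by this subgroup is cyclic. -/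
private lemma castAux {p e : ℕ} (hp : p.Prime) (s : ℕ) (u : ZMod (p^e)) :
    (((p:ℤ)^s * (u.val : ℤ) : ℤ) : ZMod (p^e)) = (p : ZMod (p^e))^s * u := by
  haveI : NeZero (p^e) := ⟨(pow_pos hp.pos e).ne'⟩
  push_cast
  rw [ZMod.natCast_val, ZMod.cast_id]

private lemma dvdAux {p e : ℕ} (hp : p.Prime) (s : ℕ) (hs : s ≤ e) (u : ZMod (p^e))
    (hu : (p : ZMod (p^e))^s * u = 0) : (p:ℤ)^(e-s) ∣ (u.val : ℤ) := by
  have h1 : ((p:ℤ))^e ∣ (p:ℤ)^s * (u.val : ℤ) := by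
    have := (ZMod.intCast_zmod_eq_zero_iff_dvd ((p:ℤ)^s * (u.val:ℤ)) (p^e)).mp
      (by rw [castAux hp, hu])
    simpa using this
  have h2 : (p:ℤ)^e = (p:ℤ)^s * (p:ℤ)^(e-s) := by
    rw [← pow_add]; congr 1; omega
  rw [h2] at h1
  have hps : ((p:ℤ))^s ≠ 0 := pow_ne_zero _ (by exact_mod_cast hp.pos.ne')
  exact (mul_dvd_mul_iff_left hps).mp h1

private lemma mulZeroAux {p e : ℕ} (hp : p.Prime) (s t : ℕ) (hs : s ≤ e) (ht : t ≤ e)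
    (hst : e ≤ s + t) (u v : ZMod (p^e))
    (hu : (p : ZMod (p^e))^(e-s) * u = 0) (hv : (p : ZMod (p^e))^(e-t) * v = 0) : u * v = 0 := by
  haveI : NeZero (p^e) := ⟨(pow_pos hp.pos e).ne'⟩
  have hU := dvdAux hp (e-s) (by omega) u hu
  have hV := dvdAux hp (e-t) (by omega) v hv
  rw [show e - (e-s) = s by omega] at hU
  rw [show e - (e-t) = t by omega] at hV
  have huv : u * v = (((u.val : ℤ) * (v.val : ℤ) : ℤ) : ZMod (p^e)) := by
    push_cast
    rw [ZMod.natCast_val, ZMod.cast_id, ZMod.natCast_val, ZMod.cast_id]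
  rw [huv, ZMod.intCast_zmod_eq_zero_iff_dvd]
  have h3 : ((p^e : ℕ):ℤ) ∣ (p:ℤ)^s * (p:ℤ)^t := by
    push_cast; rw [← pow_add]; exact pow_dvd_pow _ hst
  exact h3.trans (mul_dvd_mul hU hV)

private lemma bezoutAux {p : ℕ} (hp : p.Prime) (r : ℕ) (U1 U2 V1 V2 : ℤ)
    (h1 : ¬ (p:ℤ) ∣ U1) (h2 : (p:ℤ)^r ∣ U1*V2 - U2*V1) :
    ∃ c : ℤ, (p:ℤ)^r ∣ V1 - c*U1 ∧ (p:ℤ)^r ∣ V2 - c*U2 := by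
  have hc : IsCoprime ((p:ℤ)^r) U1 :=
    (((Prime.coprime_iff_not_dvd (Nat.prime_iff_prime_int.mp hp)).mpr h1)).pow_left
  obtain ⟨a, b, hab⟩ := hc
  obtain ⟨w, hw⟩ := h2
  exact ⟨b * V1, ⟨V1 * a, by linear_combination (-V1) * hab⟩,
    ⟨a * V2 + b * w, by linear_combination (-V2) * hab + b * hw⟩⟩

private def torsAux (N k : ℕ) : AddSubgroup (ZMod N × ZMod N) where
  carrier := {y | k • y = 0}
  zero_mem' := smul_zero k
  add_mem' := by
    intro a b ha hb
    simp only [Set.mem_setOf_eq, smul_add] at *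
    rw [ha, hb, add_zero]
  neg_mem' := by
    intro a ha
    simp only [Set.mem_setOf_eq, smul_neg] at *
    rw [ha, neg_zero]

/-- A maximal isotropic subgroup `K` of `M = (ℤ/p^eℤ)²` for the standard symplectic pairing
is generated by the full `p^m`-torsion subgroup of `M` together with one extra element `x`,
for some `m` with `2m ≤ e`. In particular `K` contains `M[p^m]` and `K/M[p^m]` is cyclic. -/
theorem maximal_isotropic_eq_torsion_sup_cyclic (p : ℕ) (hp : p.Prime) (e : ℕ) (he : 1 ≤ e)
    (K : AddSubgroup (ZMod (p ^ e) × ZMod (p ^ e)))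
    (hiso : ∀ x ∈ K, ∀ y ∈ K, x.1 * y.2 - x.2 * y.1 = 0)
    (hmax : ∀ K' : AddSubgroup (ZMod (p ^ e) × ZMod (p ^ e)),
      (∀ x ∈ K', ∀ y ∈ K', x.1 * y.2 - x.2 * y.1 = 0) → K ≤ K' → K' = K) :
    ∃ m : ℕ, 2 * m ≤ e ∧ ∃ x : ZMod (p ^ e) × ZMod (p ^ e),
      K = AddSubgroup.closure
        ({y : ZMod (p ^ e) × ZMod (p ^ e) | p ^ m • y = 0} ∪ {x}) := by
  classical
  haveI : NeZero (p ^ e) := ⟨(pow_pos hp.pos e).ne'⟩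
  set P : ℕ → Prop := fun k => ∀ a ∈ K,
      (p : ZMod (p^e))^k * a.1 = 0 ∧ (p : ZMod (p^e))^k * a.2 = 0 with hPdef
  have hPe : P e := by
    intro a ha
    have hz : (p : ZMod (p^e))^e = 0 := by
      rw [← Nat.cast_pow, ZMod.natCast_self]
    constructor <;> rw [hz, zero_mul]
  have hexP : ∃ k, P k := ⟨e, hPe⟩
  set n := Nat.find hexP with hn
  have hPn : P n := Nat.find_spec hexP
  have hne : n ≤ e := Nat.find_le hPe
  -- Step 1 : e ≤ 2n
  have h2n : e ≤ 2 * n := by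
    set z : ZMod (p^e) × ZMod (p^e) := ((p : ZMod (p^e))^n, 0) with hzdef
    have hiso' : ∀ x ∈ K ⊔ AddSubgroup.closure {z}, ∀ y ∈ K ⊔ AddSubgroup.closure {z},
        x.1 * y.2 - x.2 * y.1 = 0 := by
      intro x hx y hy
      obtain ⟨a, ha, b, hb, rfl⟩ := AddSubgroup.mem_sup.mp hx
      obtain ⟨c, rfl⟩ := AddSubgroup.mem_closure_singleton.mp hb
      obtain ⟨a', ha', b', hb', rfl⟩ := AddSubgroup.mem_sup.mp hy
      obtain ⟨c', rfl⟩ := AddSubgroup.mem_closure_singleton.mp hb'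
      have h0 := hiso a ha a' ha'
      have h1 := (hPn a ha).2
      have h2 := (hPn a' ha').2
      have e1 : (c • z).1 = (c : ZMod (p^e)) * (p : ZMod (p^e))^n := by
        rw [hzdef]; simp [zsmul_eq_mul]
      have e2 : (c • z).2 = 0 := by rw [hzdef]; simp
      have e1' : (c' • z).1 = (c' : ZMod (p^e)) * (p : ZMod (p^e))^n := by
        rw [hzdef]; simp [zsmul_eq_mul]
      have e2' : (c' • z).2 = 0 := by rw [hzdef]; simp
      simp only [Prod.fst_add, Prod.snd_add, e1, e2, e1', e2', add_zero]
      linear_combination h0 + (c : ZMod (p^e)) * h2 - (c' : ZMod (p^e)) * h1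
    have hKz := hmax _ hiso' le_sup_left
    have hzK : z ∈ K := by
      rw [← hKz]
      exact AddSubgroup.mem_sup_right (AddSubgroup.subset_closure rfl)
    have hzz : (p : ZMod (p^e))^n * (p : ZMod (p^e))^n = 0 := (hPn z hzK).1
    have : ((p^(2*n) : ℕ) : ZMod (p^e)) = 0 := by
      push_cast
      rw [two_mul, pow_add]
      exact hzz
    have hd : p^e ∣ p^(2*n) := (ZMod.natCast_eq_zero_iff _ _).mp this
    exact (Nat.pow_dvd_pow_iff_le_right hp.one_lt).mp hd
  set m := e - n with hm
  have hm2 : 2 * m ≤ e := by omega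
  refine ⟨m, hm2, ?_⟩
  -- Step 2 : torsion ≤ K
  set T := torsAux (p^e) (p^m) with hT
  have hTmem : ∀ t : ZMod (p^e) × ZMod (p^e), t ∈ T →
      (p : ZMod (p^e))^m * t.1 = 0 ∧ (p : ZMod (p^e))^m * t.2 = 0 := by
    intro t ht
    have h1 : (p^m : ℕ) • t = 0 := ht
    constructor
    · have := congrArg Prod.fst h1
      simpa [nsmul_eq_mul] using this
    · have := congrArg Prod.snd h1
      simpa [nsmul_eq_mul] using this
  have hTK : T ≤ K := by
    have hiso' : ∀ x ∈ K ⊔ T, ∀ y ∈ K ⊔ T, x.1 * y.2 - x.2 * y.1 = 0 := by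
      intro x hx y hy
      obtain ⟨a, ha, t, ht, rfl⟩ := AddSubgroup.mem_sup.mp hx
      obtain ⟨a', ha', t', ht', rfl⟩ := AddSubgroup.mem_sup.mp hy
      have h0 := hiso a ha a' ha'
      obtain ⟨ht1, ht2⟩ := hTmem t ht
      obtain ⟨ht'1, ht'2⟩ := hTmem t' ht'
      have hmn : e ≤ m + n := by omega
      have hen : e - m = n := by omega
      have hem : e - n = m := by omega
      -- individual products vanish
      have p1 : a.1 * t'.2 = 0 :=
        mulZeroAux hp m n (by omega) hne hmn a.1 t'.2 (by rw [hen]; exact (hPn a ha).1) (by rw [hem]; exact ht'2)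
      have p2 : a.2 * t'.1 = 0 :=
        mulZeroAux hp m n (by omega) hne hmn a.2 t'.1 (by rw [hen]; exact (hPn a ha).2) (by rw [hem]; exact ht'1)
      have p3 : t.1 * a'.2 = 0 :=
        mulZeroAux hp n m hne (by omega) (by omega) t.1 a'.2 (by rw [hem]; exact ht1) (by rw [hen]; exact (hPn a' ha').2)
      have p4 : t.2 * a'.1 = 0 :=
        mulZeroAux hp n m hne (by omega) (by omega) t.2 a'.1 (by rw [hem]; exact ht2) (by rw [hen]; exact (hPn a' ha').1)
      have p5 : t.1 * t'.2 = 0 :=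
        mulZeroAux hp n n hne hne (by omega) t.1 t'.2 (by rw [hem]; exact ht1) (by rw [hem]; exact ht'2)
      have p6 : t.2 * t'.1 = 0 :=
        mulZeroAux hp n n hne hne (by omega) t.2 t'.1 (by rw [hem]; exact ht2) (by rw [hem]; exact ht'1)
      simp only [Prod.fst_add, Prod.snd_add]
      linear_combination h0 + p1 - p2 + p3 - p4 + p5 - p6
    have := hmax _ hiso' le_sup_left
    rw [← this]
    exact le_sup_right
  -- Step 3 : the special element x
  have hn1 : 1 ≤ n := by omega
  have hnP : ¬ ∀ a ∈ K, ((p : ZMod (p^e))^(n-1) * a.1 = 0 ∧ (p : ZMod (p^e))^(n-1) * a.2 = 0) :=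
    Nat.find_min hexP (by omega)
  obtain ⟨x, hx⟩ := not_forall.mp hnP
  obtain ⟨hxK, hxne⟩ := _root_.not_imp.mp hx
  refine ⟨x, ?_⟩
  -- divisibility setup for x
  have hXdvd1 : (p:ℤ)^m ∣ (x.1.val : ℤ) := by
    have := dvdAux hp n hne x.1 (hPn x hxK).1
    rwa [show e - n = m by omega] at this
  have hXdvd2 : (p:ℤ)^m ∣ (x.2.val : ℤ) := by
    have := dvdAux hp n hne x.2 (hPn x hxK).2
    rwa [show e - n = m by omega] at this
  obtain ⟨U1, hU1⟩ := hXdvd1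
  obtain ⟨U2, hU2⟩ := hXdvd2
  have hUnot : ¬ ((p:ℤ) ∣ U1 ∧ (p:ℤ) ∣ U2) := by
    rintro ⟨⟨q1, hq1⟩, ⟨q2, hq2⟩⟩
    apply hxne
    constructor
    · rw [← castAux hp (n-1) x.1]
      rw [ZMod.intCast_zmod_eq_zero_iff_dvd]
      refine ⟨q1, ?_⟩
      push_cast
      rw [hU1, hq1]
      rw [show (p:ℤ)^e = (p:ℤ)^(n-1) * ((p:ℤ)^m * (p:ℤ)) by rw [← pow_succ, ← pow_add]; congr 1; omega]
      ring
    · rw [← castAux hp (n-1) x.2]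
      rw [ZMod.intCast_zmod_eq_zero_iff_dvd]
      refine ⟨q2, ?_⟩
      push_cast
      rw [hU2, hq2]
      rw [show (p:ℤ)^e = (p:ℤ)^(n-1) * ((p:ℤ)^m * (p:ℤ)) by rw [← pow_succ, ← pow_add]; congr 1; omega]
      ring
  -- Step 4 : equality
  apply le_antisymm
  · -- K ≤ closure
    intro y hy
    have hYdvd1 : (p:ℤ)^m ∣ (y.1.val : ℤ) := by
      have := dvdAux hp n hne y.1 (hPn y hy).1
      rwa [show e - n = m by omega] at this
    have hYdvd2 : (p:ℤ)^m ∣ (y.2.val : ℤ) := by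
      have := dvdAux hp n hne y.2 (hPn y hy).2
      rwa [show e - n = m by omega] at this
    obtain ⟨V1, hV1⟩ := hYdvd1
    obtain ⟨V2, hV2⟩ := hYdvd2
    -- isotropy of x and y gives p^r | U1 V2 - U2 V1, r = e - 2m
    set r := e - 2*m with hr
    have hisoxy : (p:ℤ)^r ∣ U1 * V2 - U2 * V1 := by
      have h0 := hiso x hxK y hy
      have hcast : (((x.1.val : ℤ) * (y.2.val:ℤ) - (x.2.val:ℤ) * (y.1.val:ℤ) : ℤ) : ZMod (p^e)) = 0 := by
        push_cast
        rw [ZMod.natCast_val, ZMod.cast_id, ZMod.natCast_val, ZMod.cast_id,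
          ZMod.natCast_val, ZMod.cast_id, ZMod.natCast_val, ZMod.cast_id]
        exact h0
      have hd := (ZMod.intCast_zmod_eq_zero_iff_dvd _ _).mp hcast
      rw [hU1, hU2, hV1, hV2] at hd
      have hd2 : (p:ℤ)^(2*m) * (p:ℤ)^r ∣ (p:ℤ)^(2*m) * (U1 * V2 - U2 * V1) := by
        rw [← pow_add, show 2*m + r = e by omega]
        have heq : (p:ℤ)^m * U1 * ((p:ℤ)^m * V2) - (p:ℤ)^m * U2 * ((p:ℤ)^m * V1)
            = (p:ℤ)^(2*m) * (U1*V2 - U2*V1) := by rw [two_mul, pow_add]; ring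
        rw [heq] at hd
        push_cast at hd
        exact hd
      have hps : ((p:ℤ))^(2*m) ≠ 0 := pow_ne_zero _ (by exact_mod_cast hp.pos.ne')
      exact (mul_dvd_mul_iff_left hps).mp hd2
    -- get c
    have hcc : ∃ c : ℤ, (p:ℤ)^r ∣ V1 - c*U1 ∧ (p:ℤ)^r ∣ V2 - c*U2 := by
      rcases Decidable.not_and_iff_or_not.mp hUnot with h | h
      · exact bezoutAux hp r U1 U2 V1 V2 h hisoxy
      · obtain ⟨c, hc2, hc1⟩ := bezoutAux hp r U2 U1 V2 V1 h (by
          obtain ⟨w, hw⟩ := hisoxy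
          exact ⟨-w, by linear_combination -hw⟩)
        exact ⟨c, hc1, hc2⟩
    obtain ⟨c, hc1, hc2⟩ := hcc
    -- p^m • (y - c • x) = 0
    have hkey : (p^m : ℕ) • (y - c • x) = 0 := by
      have comp : ∀ (u v : ZMod (p^e)) (U V : ℤ), (u.val : ℤ) = (p:ℤ)^m * U →
          (v.val : ℤ) = (p:ℤ)^m * V → (p:ℤ)^r ∣ V - c*U →
          (p^m : ℕ) • (v - c • u) = 0 := by
        intro u v U V hU hV hdvd
        obtain ⟨w, hw⟩ := hdvd
        have : ((( (p:ℤ)^m * ((v.val:ℤ) - c * (u.val:ℤ)) ) : ℤ) : ZMod (p^e)) = 0 := by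
          rw [ZMod.intCast_zmod_eq_zero_iff_dvd]
          refine ⟨w, ?_⟩
          push_cast
          rw [hU, hV, show ((p:ℤ))^e = (p:ℤ)^m * (p:ℤ)^m * (p:ℤ)^r by
            rw [← pow_add, ← pow_add]; congr 1; omega]
          linear_combination ((p:ℤ)^m * (p:ℤ)^m) * hw
        have hexp : (((p:ℤ)^m * ((v.val:ℤ) - c * (u.val:ℤ)) : ℤ) : ZMod (p^e))
            = (p^m : ℕ) • (v - c • u) := by
          push_cast
          rw [ZMod.natCast_val, ZMod.cast_id, ZMod.natCast_val, ZMod.cast_id]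
          rw [nsmul_eq_mul, zsmul_eq_mul]
          push_cast
          ring
        rw [← hexp]
        exact this
      have c1 := comp x.1 y.1 U1 V1 hU1 hV1 hc1
      have c2 := comp x.2 y.2 U2 V2 hU2 hV2 hc2
      have : y - c • x = (y.1 - c • x.1, y.2 - c • x.2) := rfl
      rw [this, Prod.ext_iff]
      constructor
      · simpa using c1
      · simpa using c2
    have hmem1 : y - c • x ∈ AddSubgroup.closure
        ({y : ZMod (p ^ e) × ZMod (p ^ e) | p ^ m • y = 0} ∪ {x}) :=
      AddSubgroup.subset_closure (Set.mem_union_left _ hkey)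
    have hmem2 : c • x ∈ AddSubgroup.closure
        ({y : ZMod (p ^ e) × ZMod (p ^ e) | p ^ m • y = 0} ∪ {x}) :=
      AddSubgroup.zsmul_mem _ (AddSubgroup.subset_closure (Set.mem_union_right _ (Set.mem_singleton x))) c
    have := add_mem hmem1 hmem2
    simpa using this
  · -- closure ≤ K
    rw [AddSubgroup.closure_le]
    rintro s (hs | hs)
    · exact hTK hs
    · rw [hs]
      exact hxK
end

section
/- Let p be a prime and e ≥ 1. Let m be an integer with 0 ≤ m and 2m ≤ e, and let x be an element of M = (ℤ/p^eℤ)² whose additive order is exactly p^{e−m}. Then the subgroup of M generated by the p^m-torsion subgroup {y ∈ M : p^m·y = 0} together with x is a maximal isotropic subgroup of M with respect to the standard symplectic pairing ω, of cardinality p^e. -/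
lemma aux_top {p n : ℕ} : (p : ZMod (p ^ n)) ^ n = 0 := by
  have : ((p ^ n : ℕ) : ZMod (p ^ n)) = 0 := ZMod.natCast_self _
  push_cast at this
  exact this

lemma aux_div {A B n : ℕ} (hn : n = A * B) (hA : 0 < A) (hB : 0 < B) (y : ZMod n) :
    (A : ZMod n) * y = 0 ↔ ∃ z : ZMod n, y = (B : ZMod n) * z := by
  subst hn
  haveI : NeZero (A * B) := ⟨by positivity⟩
  constructor
  · intro h
    have hy : ((A * y.val : ℕ) : ZMod (A * B)) = 0 := by
      push_cast
      rw [ZMod.natCast_val, ZMod.cast_id]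
      exact h
    rw [ZMod.natCast_eq_zero_iff] at hy
    obtain ⟨k, hk⟩ := hy
    have hk' : y.val = B * k := by
      apply Nat.eq_of_mul_eq_mul_left hA
      rw [hk]; ring
    refine ⟨(k : ZMod (A * B)), ?_⟩
    have : ((y.val : ℕ) : ZMod (A * B)) = ((B * k : ℕ) : ZMod (A * B)) := by rw [hk']
    rw [ZMod.natCast_val, ZMod.cast_id] at this
    push_cast at this
    exact this
  · rintro ⟨z, rfl⟩
    rw [← mul_assoc, ← Nat.cast_mul, ZMod.natCast_self, zero_mul]

lemma aux_unit {p n : ℕ} (hp : p.Prime) (u : ZMod (p ^ n)) (h : ¬ IsUnit u) :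
    ∃ w, u = (p : ZMod (p ^ n)) * w := by
  rcases Nat.eq_zero_or_pos n with rfl | hn
  · haveI : Subsingleton (ZMod (p ^ 0)) := by rw [pow_zero]; exact inferInstance
    exact ⟨0, Subsingleton.elim _ _⟩
  haveI : NeZero (p ^ n) := ⟨pow_ne_zero _ hp.pos.ne'⟩
  have hiu := ZMod.isUnit_iff_coprime u.val (p ^ n)
  rw [ZMod.natCast_val, ZMod.cast_id] at hiu
  have hnc : ¬ u.val.Coprime (p ^ n) := fun hc => h (hiu.mpr hc)
  have hpd : p ∣ u.val := by
    by_contra hpd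
    exact hnc (Nat.Coprime.pow_right _
      (Nat.coprime_comm.mp ((Nat.Prime.coprime_iff_not_dvd hp).mpr hpd)))
  obtain ⟨k, hk⟩ := hpd
  refine ⟨(k : ZMod (p ^ n)), ?_⟩
  have : ((u.val : ℕ) : ZMod (p ^ n)) = ((p * k : ℕ) : ZMod (p ^ n)) := by rw [hk]
  rw [ZMod.natCast_val, ZMod.cast_id] at this
  push_cast at this
  exact this

lemma aux_tt {p m s : ℕ} (hp : p.Prime) (hms : m ≤ s) (a b : ZMod (p ^ (m + s)))
    (ha : (p : ZMod (p ^ (m + s))) ^ m * a = 0) (hb : (p : ZMod (p ^ (m + s))) ^ m * b = 0) :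
    a * b = 0 := by
  let R := ZMod (p ^ (m + s))
  have hpow : ∀ k, ((p ^ k : ℕ) : R) = (p : R) ^ k := by intro k; push_cast; ring
  have ha' : ∃ z : R, a = (p : R) ^ s * z := by
    have := (aux_div (n := p ^ (m + s)) (A := p ^ m) (B := p ^ s)
      (by rw [← pow_add]) (pow_pos hp.pos m) (pow_pos hp.pos s) a)
    rw [hpow m, hpow s] at this
    exact this.mp ha
  obtain ⟨z, rfl⟩ := ha'
  have hsb : (p : R) ^ s * b = 0 := by
    have : (p : R) ^ s = (p : R) ^ (s - m) * (p : R) ^ m := by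
      rw [← pow_add, Nat.sub_add_cancel hms]
    rw [this, mul_assoc, hb, mul_zero]
  calc (p : R) ^ s * z * b = z * ((p : R) ^ s * b) := by ring
  _ = 0 := by rw [hsb, mul_zero]

lemma aux_div' {p a b n : ℕ} (hp : p.Prime) (hn : n = a + b) (y : ZMod (p ^ n))
    (h : (p : ZMod (p ^ n)) ^ a * y = 0) : ∃ z, y = (p : ZMod (p ^ n)) ^ b * z := by
  have := aux_div (n := p ^ n) (A := p ^ a) (B := p ^ b)
    (by rw [hn, pow_add]) (pow_pos hp.pos _) (pow_pos hp.pos _) y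
  push_cast at this
  exact this.mp h

lemma aux_decomp {p m s : ℕ} (hp : p.Prime) (hms : m ≤ s) (u v z1 z2 : ZMod (p ^ (m + s)))
    (hu : IsUnit u)
    (h1 : (p : ZMod (p ^ (m + s))) ^ s * z1 = 0)
    (h2 : (p : ZMod (p ^ (m + s))) ^ s * z2 = 0)
    (hw : z1 * ((p : ZMod (p ^ (m + s))) ^ m * v)
        - z2 * ((p : ZMod (p ^ (m + s))) ^ m * u) = 0) :
    ∃ (c : ℕ) (t1 t2 : ZMod (p ^ (m + s))),
      (p : ZMod (p ^ (m + s))) ^ m * t1 = 0 ∧ (p : ZMod (p ^ (m + s))) ^ m * t2 = 0 ∧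
      z1 = t1 + (c : ZMod (p ^ (m + s))) * ((p : ZMod (p ^ (m + s))) ^ m * u) ∧
      z2 = t2 + (c : ZMod (p ^ (m + s))) * ((p : ZMod (p ^ (m + s))) ^ m * v) := by
  haveI : NeZero (p ^ (m + s)) := ⟨pow_ne_zero _ hp.pos.ne'⟩
  obtain ⟨w1, hz1⟩ := aux_div' hp (add_comm m s) z1 h1
  obtain ⟨w2, hz2⟩ := aux_div' hp (add_comm m s) z2 h2
  obtain ⟨U, hU⟩ := hu
  set ui : ZMod (p ^ (m + s)) := ((U⁻¹ : (ZMod (p ^ (m + s)))ˣ) : ZMod (p ^ (m + s))) with hui_def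
  have hui : u * ui = 1 := by rw [← hU]; exact_mod_cast U.mul_inv
  refine ⟨(w1 * ui).val, 0, z2 - ((w1 * ui).val : ZMod (p ^ (m + s)))
    * ((p : ZMod (p ^ (m + s))) ^ m * v), by rw [mul_zero], ?_, ?_, by ring⟩
  · have hc : (((w1 * ui).val : ℕ) : ZMod (p ^ (m + s))) = w1 * ui := by
      rw [ZMod.natCast_val, ZMod.cast_id]
    rw [hz1, hz2] at hw
    rw [hc, hz2]
    linear_combination (-ui) * hw
      + (-(p : ZMod (p ^ (m + s))) ^ m * (p : ZMod (p ^ (m + s))) ^ m * w2) * hui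
  · have hc : (((w1 * ui).val : ℕ) : ZMod (p ^ (m + s))) = w1 * ui := by
      rw [ZMod.natCast_val, ZMod.cast_id]
    rw [hc, hz1]
    linear_combination (-(p : ZMod (p ^ (m + s))) ^ m * w1) * hui

lemma aux_cancel {p : ℕ} (hp : p.Prime) {k j n : ℕ} (hn : n = k + j) (a b : ℕ)
    (ha : a < p ^ j) (hb : b < p ^ j)
    (h : (p : ZMod (p ^ n)) ^ k * (a : ZMod (p ^ n)) = (p : ZMod (p ^ n)) ^ k * b) : a = b := by
  have hz : (((p : ℤ) ^ k * a - (p : ℤ) ^ k * b : ℤ) : ZMod (p ^ n)) = 0 := by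
    push_cast
    linear_combination h
  rw [ZMod.intCast_zmod_eq_zero_iff_dvd] at hz
  have hsplit : ((p ^ n : ℕ) : ℤ) = (p : ℤ) ^ k * (p : ℤ) ^ j := by
    push_cast; rw [← pow_add, hn]
  rw [hsplit, show (p : ℤ) ^ k * a - (p : ℤ) ^ k * b = (p : ℤ) ^ k * ((a : ℤ) - b) by ring] at hz
  have hd : (p : ℤ) ^ j ∣ (a : ℤ) - b :=
    (mul_dvd_mul_iff_left (pow_ne_zero k (by exact_mod_cast hp.pos.ne' : (p : ℤ) ≠ 0))).mp hz
  have hab : (a : ℤ) - b = 0 := by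
    apply Int.eq_zero_of_abs_lt_dvd hd
    have hpj : ((p ^ j : ℕ) : ℤ) = (p : ℤ) ^ j := by push_cast; ring
    rw [← hpj, abs_sub_lt_iff]
    constructor <;> omega
  omega

lemma aux_pow_zero {p n k : ℕ} (h : n ≤ k) : (p : ZMod (p ^ n)) ^ k = 0 := by
  have : ((p ^ k : ℕ) : ZMod (p ^ n)) = 0 :=
    (ZMod.natCast_eq_zero_iff _ _).mpr (pow_dvd_pow p h)
  push_cast at this
  exact this
/-- Let `m` be an integer with `2m ≤ e`, and let `x ∈ M = (ℤ/p^eℤ)²` have additive order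
exactly `p^(e-m)`. Then the subgroup generated by the `p^m`-torsion subgroup of `M` together
with `x` is maximal isotropic for the standard symplectic pairing, of cardinality `p^e`. -/
theorem torsion_sup_cyclic_is_maximal_isotropic (p : ℕ) (hp : p.Prime) (e : ℕ) (he : 1 ≤ e)
    (m : ℕ) (hm : 2 * m ≤ e) (x : ZMod (p ^ e) × ZMod (p ^ e))
    (hx : addOrderOf x = p ^ (e - m))
    (K : AddSubgroup (ZMod (p ^ e) × ZMod (p ^ e)))
    (hK : K = AddSubgroup.closure
      ({y : ZMod (p ^ e) × ZMod (p ^ e) | p ^ m • y = 0} ∪ {x})) :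
    (∀ u ∈ K, ∀ v ∈ K, u.1 * v.2 - u.2 * v.1 = 0) ∧
    (∀ K' : AddSubgroup (ZMod (p ^ e) × ZMod (p ^ e)),
      (∀ u ∈ K', ∀ v ∈ K', u.1 * v.2 - u.2 * v.1 = 0) → K ≤ K' → K' = K) ∧
    Nat.card K = p ^ e := by
  subst hK
  obtain ⟨s, rfl⟩ : ∃ s, e = m + s := ⟨e - m, by omega⟩
  have hms : m ≤ s := by omega
  have hs1 : 1 ≤ s := by omega
  rw [show m + s - m = s by omega] at hx
  haveI hNZ : NeZero (p ^ (m + s)) := ⟨pow_ne_zero _ hp.pos.ne'⟩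
  have hsmul : ∀ (k : ℕ) (y : ZMod (p ^ (m + s)) × ZMod (p ^ (m + s))),
      k • y = ((k : ZMod (p ^ (m + s))) * y.1, (k : ZMod (p ^ (m + s))) * y.2) := by
    intro k y; rw [Prod.ext_iff]; constructor <;> simp [nsmul_eq_mul]
  have hss : (p : ZMod (p ^ (m + s))) ^ s * (p : ZMod (p ^ (m + s))) ^ s = 0 := by
    rw [← pow_add]; exact aux_pow_zero (by omega)
  have hsm : (p : ZMod (p ^ (m + s))) ^ s * (p : ZMod (p ^ (m + s))) ^ m = 0 := by
    rw [← pow_add]; exact aux_pow_zero (by omega)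
  have hmss : (p : ZMod (p ^ (m + s))) ^ m * (p : ZMod (p ^ (m + s))) ^ s = 0 := by
    rw [← pow_add]; exact aux_pow_zero (by omega)
  have hxo : (p ^ s : ℕ) • x = 0 := by rw [← hx]; exact addOrderOf_nsmul_eq_zero x
  rw [hsmul] at hxo
  have hx1 : (p : ZMod (p ^ (m + s))) ^ s * x.1 = 0 := by
    have := congrArg Prod.fst hxo; push_cast at this ⊢; exact this
  have hx2 : (p : ZMod (p ^ (m + s))) ^ s * x.2 = 0 := by
    have := congrArg Prod.snd hxo; push_cast at this ⊢; exact this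
  obtain ⟨u, hxu⟩ := aux_div' hp (add_comm m s) x.1 hx1
  obtain ⟨v, hxv⟩ := aux_div' hp (add_comm m s) x.2 hx2
  have hnd : ¬ ((p ^ (s - 1) : ℕ) • x = 0) := by
    intro h
    have hdvd : p ^ s ∣ p ^ (s - 1) := by
      rw [← hx]; exact addOrderOf_dvd_iff_nsmul_eq_zero.mpr h
    have := (Nat.pow_dvd_pow_iff_le_right hp.one_lt).mp hdvd
    omega
  have huv : IsUnit u ∨ IsUnit v := by
    by_contra hc
    push_neg at hc
    obtain ⟨u', hu'⟩ := aux_unit hp u hc.1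
    obtain ⟨v', hv'⟩ := aux_unit hp v hc.2
    apply hnd
    rw [hsmul]
    have hkey : ∀ w : ZMod (p ^ (m + s)),
        ((p ^ (s - 1) : ℕ) : ZMod (p ^ (m + s)))
          * ((p : ZMod (p ^ (m + s))) ^ m * ((p : ZMod (p ^ (m + s))) * w)) = 0 := by
      intro w
      push_cast
      have h1 : (p : ZMod (p ^ (m + s))) ^ (s - 1) * (p : ZMod (p ^ (m + s))) ^ m
          * (p : ZMod (p ^ (m + s))) ^ 1 = 0 := by
        rw [← pow_add, ← pow_add]; exact aux_pow_zero (by omega)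
      linear_combination w * h1
    refine Prod.ext_iff.mpr ⟨?_, ?_⟩ <;> simp only [Prod.fst_zero, Prod.snd_zero]
    · rw [hxu, hu']; exact hkey u'
    · rw [hxv, hv']; exact hkey v'
  set S : AddSubgroup (ZMod (p ^ (m + s)) × ZMod (p ^ (m + s))) :=
    { carrier := {z | (p : ZMod (p ^ (m + s))) ^ s * z.1 = 0 ∧
        (p : ZMod (p ^ (m + s))) ^ s * z.2 = 0 ∧ z.1 * x.2 - z.2 * x.1 = 0}
      zero_mem' := by simp
      add_mem' := by
        rintro a b ⟨ha1, ha2, ha3⟩ ⟨hb1, hb2, hb3⟩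
        refine ⟨?_, ?_, ?_⟩ <;> simp only [Prod.fst_add, Prod.snd_add]
        · linear_combination ha1 + hb1
        · linear_combination ha2 + hb2
        · linear_combination ha3 + hb3
      neg_mem' := by
        rintro a ⟨ha1, ha2, ha3⟩
        refine ⟨?_, ?_, ?_⟩ <;> simp only [Prod.fst_neg, Prod.snd_neg]
        · linear_combination -ha1
        · linear_combination -ha2
        · linear_combination -ha3 } with hSdef
  have hSmem : ∀ z : ZMod (p ^ (m + s)) × ZMod (p ^ (m + s)), z ∈ S ↔
      ((p : ZMod (p ^ (m + s))) ^ s * z.1 = 0 ∧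
        (p : ZMod (p ^ (m + s))) ^ s * z.2 = 0 ∧ z.1 * x.2 - z.2 * x.1 = 0) :=
    fun z => Iff.rfl
  have hxS : x ∈ S := (hSmem x).mpr ⟨hx1, hx2, by ring⟩
  have hdec : ∀ z : ZMod (p ^ (m + s)) × ZMod (p ^ (m + s)),
      (p : ZMod (p ^ (m + s))) ^ s * z.1 = 0 → (p : ZMod (p ^ (m + s))) ^ s * z.2 = 0 →
      z.1 * x.2 - z.2 * x.1 = 0 →
      ∃ (c : ℕ) (t1 t2 : ZMod (p ^ (m + s))),
        (p : ZMod (p ^ (m + s))) ^ m * t1 = 0 ∧ (p : ZMod (p ^ (m + s))) ^ m * t2 = 0 ∧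
        z.1 = t1 + (c : ZMod (p ^ (m + s))) * ((p : ZMod (p ^ (m + s))) ^ m * u) ∧
        z.2 = t2 + (c : ZMod (p ^ (m + s))) * ((p : ZMod (p ^ (m + s))) ^ m * v) := by
    intro z h1 h2 h3
    rw [hxu, hxv] at h3
    rcases huv with hu | hv
    · exact aux_decomp hp hms u v z.1 z.2 hu h1 h2 h3
    · obtain ⟨c, t2, t1, ht2, ht1, hz2, hz1⟩ :=
        aux_decomp hp hms v u z.2 z.1 hv h2 h1 (by linear_combination -h3)
      exact ⟨c, t1, t2, ht1, ht2, hz1, hz2⟩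
  have hKS : AddSubgroup.closure
      ({y : ZMod (p ^ (m + s)) × ZMod (p ^ (m + s)) | p ^ m • y = 0} ∪ {x}) = S := by
    apply le_antisymm
    · rw [AddSubgroup.closure_le]
      rintro z (hz | hz)
      · rw [Set.mem_setOf_eq, hsmul] at hz
        have hz1 : (p : ZMod (p ^ (m + s))) ^ m * z.1 = 0 := by
          have := congrArg Prod.fst hz; push_cast at this ⊢; exact this
        have hz2 : (p : ZMod (p ^ (m + s))) ^ m * z.2 = 0 := by
          have := congrArg Prod.snd hz; push_cast at this ⊢; exact this
        have hps : (p : ZMod (p ^ (m + s))) ^ s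
            = (p : ZMod (p ^ (m + s))) ^ (s - m) * (p : ZMod (p ^ (m + s))) ^ m := by
          rw [← pow_add, show s - m + m = s by omega]
        refine (hSmem z).mpr ⟨?_, ?_, ?_⟩
        · rw [hps]; linear_combination (p : ZMod (p ^ (m + s))) ^ (s - m) * hz1
        · rw [hps]; linear_combination (p : ZMod (p ^ (m + s))) ^ (s - m) * hz2
        · rw [hxu, hxv]; linear_combination v * hz1 - u * hz2
      · rw [Set.mem_singleton_iff] at hz; subst hz; exact hxS
    · intro z hz
      rw [hSmem] at hz
      obtain ⟨c, t1, t2, ht1, ht2, hz1, hz2⟩ := hdec z hz.1 hz.2.1 hz.2.2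
      have hzeq : z = (t1, t2) + c • x := by
        rw [hsmul]
        refine Prod.ext_iff.mpr ⟨?_, ?_⟩ <;> simp only [Prod.fst_add, Prod.snd_add]
        · rw [hz1, hxu]
        · rw [hz2, hxv]
      rw [hzeq]
      apply AddSubgroup.add_mem
      · apply AddSubgroup.subset_closure
        apply Set.mem_union_left
        rw [Set.mem_setOf_eq, hsmul]
        refine Prod.ext_iff.mpr ⟨?_, ?_⟩ <;> simp only [Prod.fst_zero, Prod.snd_zero]
        · push_cast; exact ht1
        · push_cast; exact ht2
      · refine AddSubgroup.nsmul_mem _ (AddSubgroup.subset_closure ?_) c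
        exact Set.mem_union_right _ (Set.mem_singleton x)
  refine ⟨?_, ?_, ?_⟩
  · -- isotropy
    intro a ha b hb
    rw [hKS, hSmem] at ha hb
    obtain ⟨c, ta1, ta2, hta1, hta2, ha1, ha2⟩ := hdec a ha.1 ha.2.1 ha.2.2
    obtain ⟨d, tb1, tb2, htb1, htb2, hb1, hb2⟩ := hdec b hb.1 hb.2.1 hb.2.2
    have htt1 : ta1 * tb2 = 0 := aux_tt hp hms _ _ hta1 htb2
    have htt2 : ta2 * tb1 = 0 := aux_tt hp hms _ _ hta2 htb1
    rw [ha1, ha2, hb1, hb2]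
    linear_combination htt1 - htt2 + ((d : ZMod (p ^ (m + s))) * v) * hta1
      - ((d : ZMod (p ^ (m + s))) * u) * hta2
      + ((c : ZMod (p ^ (m + s))) * u) * htb2 - ((c : ZMod (p ^ (m + s))) * v) * htb1
  · -- maximality
    intro K' hiso hle
    rw [hKS] at hle ⊢
    refine le_antisymm ?_ hle
    intro z hz
    have h01 : (((0 : ZMod (p ^ (m + s))), (p : ZMod (p ^ (m + s))) ^ s)
        : ZMod (p ^ (m + s)) × ZMod (p ^ (m + s))) ∈ S := by
      refine (hSmem _).mpr ⟨by simp, by simpa using hss, ?_⟩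
      show (0 : ZMod (p ^ (m + s))) * x.2 - (p : ZMod (p ^ (m + s))) ^ s * x.1 = 0
      linear_combination -hx1
    have h10 : (((p : ZMod (p ^ (m + s))) ^ s, (0 : ZMod (p ^ (m + s))))
        : ZMod (p ^ (m + s)) × ZMod (p ^ (m + s))) ∈ S := by
      refine (hSmem _).mpr ⟨by simpa using hss, by simp, ?_⟩
      show (p : ZMod (p ^ (m + s))) ^ s * x.2 - (0 : ZMod (p ^ (m + s))) * x.1 = 0
      linear_combination hx2
    refine (hSmem z).mpr ⟨?_, ?_, ?_⟩
    · have h := hiso z hz _ (hle h01)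
      show (p : ZMod (p ^ (m + s))) ^ s * z.1 = 0
      linear_combination h
    · have h := hiso z hz _ (hle h10)
      show (p : ZMod (p ^ (m + s))) ^ s * z.2 = 0
      linear_combination -h
    · exact hiso z hz x (hle hxS)
  · -- cardinality
    rw [hKS]
    obtain ⟨r, hr⟩ : ∃ r, s = m + r := ⟨s - m, by omega⟩
    haveI : NeZero (p ^ m) := ⟨pow_ne_zero _ hp.pos.ne'⟩
    haveI : NeZero (p ^ r) := ⟨pow_ne_zero _ hp.pos.ne'⟩
    have hrm : (p : ZMod (p ^ (m + s))) ^ r * (p : ZMod (p ^ (m + s))) ^ m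
        = (p : ZMod (p ^ (m + s))) ^ s := by rw [← pow_add, show r + m = s by omega]
    have hfmem : ∀ w : ZMod (p ^ m) × ZMod (p ^ m) × ZMod (p ^ r),
        ((p : ZMod (p ^ (m + s))) ^ s * (w.1.val : ZMod (p ^ (m + s)))
            + (w.2.2.val : ZMod (p ^ (m + s))) * x.1,
          (p : ZMod (p ^ (m + s))) ^ s * (w.2.1.val : ZMod (p ^ (m + s)))
            + (w.2.2.val : ZMod (p ^ (m + s))) * x.2) ∈ S := by
      intro w
      refine (hSmem _).mpr ⟨?_, ?_, ?_⟩
      · show (p : ZMod (p ^ (m + s))) ^ s * ((p : ZMod (p ^ (m + s))) ^ s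
            * (w.1.val : ZMod (p ^ (m + s))) + (w.2.2.val : ZMod (p ^ (m + s))) * x.1) = 0
        linear_combination (w.1.val : ZMod (p ^ (m + s))) * hss
          + (w.2.2.val : ZMod (p ^ (m + s))) * hx1
      · show (p : ZMod (p ^ (m + s))) ^ s * ((p : ZMod (p ^ (m + s))) ^ s
            * (w.2.1.val : ZMod (p ^ (m + s))) + (w.2.2.val : ZMod (p ^ (m + s))) * x.2) = 0
        linear_combination (w.2.1.val : ZMod (p ^ (m + s))) * hss
          + (w.2.2.val : ZMod (p ^ (m + s))) * hx2
      · show ((p : ZMod (p ^ (m + s))) ^ s * (w.1.val : ZMod (p ^ (m + s)))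
            + (w.2.2.val : ZMod (p ^ (m + s))) * x.1) * x.2
          - ((p : ZMod (p ^ (m + s))) ^ s * (w.2.1.val : ZMod (p ^ (m + s)))
            + (w.2.2.val : ZMod (p ^ (m + s))) * x.2) * x.1 = 0
        rw [hxu, hxv]
        linear_combination ((w.1.val : ZMod (p ^ (m + s))) * v
          - (w.2.1.val : ZMod (p ^ (m + s))) * u) * hsm
    set f : ZMod (p ^ m) × ZMod (p ^ m) × ZMod (p ^ r) → S := fun w => ⟨_, hfmem w⟩ with hfdef
    have hinj : Function.Injective f := by
      rintro ⟨a, b, c⟩ ⟨a', b', c'⟩ h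
      simp only [hfdef, Subtype.mk.injEq, Prod.mk.injEq] at h
      obtain ⟨h1, h2⟩ := h
      have hcc : c = c' := by
        apply ZMod.val_injective
        apply aux_cancel hp (show m + s = 2 * m + r by omega) _ _
          (ZMod.val_lt c) (ZMod.val_lt c')
        have h2m : (p : ZMod (p ^ (m + s))) ^ (2 * m)
            = (p : ZMod (p ^ (m + s))) ^ m * (p : ZMod (p ^ (m + s))) ^ m := by
          rw [← pow_add]; congr 1; omega
        rw [h2m]
        rcases huv with hu | hv
        · obtain ⟨U, hU⟩ := hu
          have hui : u * ((U⁻¹ : (ZMod (p ^ (m + s)))ˣ) : ZMod (p ^ (m + s))) = 1 := by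
            rw [← hU]; exact_mod_cast U.mul_inv
          rw [hxu] at h1
          linear_combination ((p : ZMod (p ^ (m + s))) ^ m
              * ((U⁻¹ : (ZMod (p ^ (m + s)))ˣ) : ZMod (p ^ (m + s)))) * h1
            + (((U⁻¹ : (ZMod (p ^ (m + s)))ˣ) : ZMod (p ^ (m + s)))
              * ((a'.val : ZMod (p ^ (m + s))) - (a.val : ZMod (p ^ (m + s))))) * hmss
            + ((p : ZMod (p ^ (m + s))) ^ m * (p : ZMod (p ^ (m + s))) ^ m
              * ((c'.val : ZMod (p ^ (m + s))) - (c.val : ZMod (p ^ (m + s))))) * hui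
        · obtain ⟨U, hU⟩ := hv
          have hui : v * ((U⁻¹ : (ZMod (p ^ (m + s)))ˣ) : ZMod (p ^ (m + s))) = 1 := by
            rw [← hU]; exact_mod_cast U.mul_inv
          rw [hxv] at h2
          linear_combination ((p : ZMod (p ^ (m + s))) ^ m
              * ((U⁻¹ : (ZMod (p ^ (m + s)))ˣ) : ZMod (p ^ (m + s)))) * h2
            + (((U⁻¹ : (ZMod (p ^ (m + s)))ˣ) : ZMod (p ^ (m + s)))
              * ((b'.val : ZMod (p ^ (m + s))) - (b.val : ZMod (p ^ (m + s))))) * hmss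
            + ((p : ZMod (p ^ (m + s))) ^ m * (p : ZMod (p ^ (m + s))) ^ m
              * ((c'.val : ZMod (p ^ (m + s))) - (c.val : ZMod (p ^ (m + s))))) * hui
      subst hcc
      have haa : a = a' := by
        apply ZMod.val_injective
        apply aux_cancel hp (show m + s = s + m by omega) _ _
          (ZMod.val_lt a) (ZMod.val_lt a')
        linear_combination h1
      have hbb : b = b' := by
        apply ZMod.val_injective
        apply aux_cancel hp (show m + s = s + m by omega) _ _
          (ZMod.val_lt b) (ZMod.val_lt b')
        linear_combination h2
      rw [haa, hbb]
    have hsurj : Function.Surjective f := by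
      rintro ⟨z, hz⟩
      rw [hSmem] at hz
      obtain ⟨c, t1, t2, ht1, ht2, hz1, hz2⟩ := hdec z hz.1 hz.2.1 hz.2.2
      obtain ⟨w1, hw1⟩ := aux_div' hp rfl t1 ht1
      obtain ⟨w2, hw2⟩ := aux_div' hp rfl t2 ht2
      have hkey : ∀ W : ZMod (p ^ (m + s)),
          (p : ZMod (p ^ (m + s))) ^ s
              * ((((W.val : ℕ) : ZMod (p ^ m)).val : ℕ) : ZMod (p ^ (m + s)))
            = (p : ZMod (p ^ (m + s))) ^ s * W := by
        intro W
        rw [ZMod.val_natCast]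
        have hdm : ((p ^ m * (W.val / p ^ m) + W.val % p ^ m : ℕ) : ZMod (p ^ (m + s)))
            = ((W.val : ℕ) : ZMod (p ^ (m + s))) := by rw [Nat.div_add_mod]
        rw [ZMod.natCast_val, ZMod.cast_id] at hdm
        push_cast at hdm
        linear_combination (p : ZMod (p ^ (m + s))) ^ s * hdm
          - ((W.val / p ^ m : ℕ) : ZMod (p ^ (m + s))) * hmss
      set q := c / p ^ r with hqdef
      have hcq : p ^ r * q + c % p ^ r = c := Nat.div_add_mod c (p ^ r)
      have hcr : (((c : ZMod (p ^ r)).val : ℕ) : ZMod (p ^ (m + s)))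
          = (c : ZMod (p ^ (m + s)))
            - (p : ZMod (p ^ (m + s))) ^ r * (q : ZMod (p ^ (m + s))) := by
        rw [ZMod.val_natCast]
        have hcast : ((p ^ r * q + c % p ^ r : ℕ) : ZMod (p ^ (m + s)))
            = (c : ZMod (p ^ (m + s))) := by rw [hcq]
        push_cast at hcast
        linear_combination hcast
      refine ⟨(((w1 + (q : ZMod (p ^ (m + s))) * u).val : ZMod (p ^ m)),
              ((w2 + (q : ZMod (p ^ (m + s))) * v).val : ZMod (p ^ m)),
              (c : ZMod (p ^ r))), ?_⟩
      simp only [hfdef]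
      apply Subtype.ext
      refine Prod.ext_iff.mpr ⟨?_, ?_⟩ <;> dsimp only
      · rw [hkey (w1 + (q : ZMod (p ^ (m + s))) * u), hcr, hz1, hw1, hxu]
        linear_combination (-(q : ZMod (p ^ (m + s))) * u) * hrm
      · rw [hkey (w2 + (q : ZMod (p ^ (m + s))) * v), hcr, hz2, hw2, hxv]
        linear_combination (-(q : ZMod (p ^ (m + s))) * v) * hrm
    have hc := Nat.card_eq_of_bijective f ⟨hinj, hsurj⟩
    rw [← hc]
    simp only [Nat.card_prod, Nat.card_zmod]
    rw [← pow_add, ← pow_add]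
    congr 1
    omega
end

section
/- Let p be a prime and e ≥ 1. Let m be an integer with 0 ≤ m and 2m ≤ e, let x ∈ M = (ℤ/p^eℤ)² have additive order exactly p^{e−m}, and let K be the subgroup of M generated by the p^m-torsion subgroup {y ∈ M : p^m·y = 0} together with x (so K is maximal isotropic). Let r and q be integers with 0 ≤ r ≤ m and 0 ≤ q ≤ e−2m, and set K' to be the subgroup of M generated by the p^r-torsion subgroup {y ∈ M : p^r·y = 0} together with p^{e−m−r−q}·K. Then: (1) K' has cardinality p^{2r+q}; (2) K' is contained in the p^{2r+q}-torsion subgroup {y ∈ M : p^{2r+q}·y = 0}; and (3) ω(u,v) = 0 for all u, v ∈ K'. -/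
/-!
Multiplication by `p ^ (e - m - r - q)` maps the `p ^ m`-torsion into the `p ^ r`-torsion, so
`K' = M[p ^ r] ⊔ ⟨w⟩` with `w = p ^ (e - m - r - q) • x` of order `p ^ (r + q)`. Inside `⟨w⟩` the
`p ^ r`-torsion is `⟨p ^ q • w⟩`, of order `p ^ r`, whence `|K'| = p ^ (2 r) · p ^ q`.
The coordinates of a `p ^ j`-torsion vector of `M` are divisible by `p ^ (e - j)`, so the pairing
vanishes on `M[p ^ j] × M[p ^ k]` when `j + k ≤ e`; as `2 r + q ≤ e`, this kills the pairing on
the generators of `K'`, and hence on `K'`.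
-/

namespace AddSubgroup

variable {G : Type*} [AddCommGroup G]

lemma torsionBy_natCast_mono {a b : ℕ} (h : a ∣ b) : torsionBy G a ≤ torsionBy G b :=
  Submodule.torsionBy_le_torsionBy_of_dvd _ _ (Int.natCast_dvd_natCast.2 h)

lemma torsionBy_inf_zmultiples {n d : ℕ} {w : G} (hn : n ≠ 0) (hw : addOrderOf w = n * d) :
    torsionBy G n ⊓ zmultiples w = zmultiples (d • w) := by
  ext z
  simp only [mem_inf, torsionBy.nsmul_iff, mem_zmultiples_iff]
  constructor
  · rintro ⟨hz, k, rfl⟩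
    have hdvd : (n : ℤ) * d ∣ n * k := by
      rw [← Nat.cast_mul, ← hw, addOrderOf_dvd_iff_zsmul_eq_zero, mul_zsmul, natCast_zsmul, hz]
    obtain ⟨c, rfl⟩ := (mul_dvd_mul_iff_left (Int.natCast_ne_zero.2 hn)).1 hdvd
    exact ⟨c, by rw [mul_zsmul', natCast_zsmul]⟩
  · rintro ⟨c, rfl⟩
    refine ⟨?_, c * d, by rw [mul_zsmul, natCast_zsmul]⟩
    rw [smul_comm, smul_smul, ← hw, addOrderOf_nsmul_eq_zero, smul_zero]

lemma card_torsionBy_inf_zmultiples {n d : ℕ} {w : G} (hn : n ≠ 0) (hd : d ≠ 0)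
    (hw : addOrderOf w = n * d) : Nat.card (torsionBy G n ⊓ zmultiples w : AddSubgroup G) = n := by
  rw [torsionBy_inf_zmultiples hn hw, Nat.card_zmultiples,
    addOrderOf_nsmul_of_dvd hd (hw ▸ dvd_mul_left d n), hw, Nat.mul_div_cancel _ hd.bot_lt]

lemma card_sup_mul_card_inf (H K : AddSubgroup G) :
    Nat.card (H ⊔ K : AddSubgroup G) * Nat.card (H ⊓ K : AddSubgroup G) =
      Nat.card H * Nat.card K := by
  have hsup : Nat.card H * H.relIndex K = Nat.card (H ⊔ K : AddSubgroup G) := by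
    rw [← relIndex_sup_left, ← relIndex_bot_left, ← relIndex_bot_left,
      relIndex_mul_relIndex _ _ _ bot_le le_sup_left]
  have hinf : Nat.card (H ⊓ K : AddSubgroup G) * H.relIndex K = Nat.card K := by
    rw [← inf_relIndex_right, ← relIndex_bot_left, ← relIndex_bot_left,
      relIndex_mul_relIndex _ _ _ bot_le inf_le_right]
  rw [← hsup, ← hinf]
  ring

lemma card_torsionBy_sup_zmultiples {n d : ℕ} {w : G} (hn : n ≠ 0) (hd : d ≠ 0)
    (hw : addOrderOf w = n * d) :
    Nat.card (torsionBy G n ⊔ zmultiples w : AddSubgroup G) = Nat.card (torsionBy G n) * d := by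
  have h := card_sup_mul_card_inf (torsionBy G n) (zmultiples w)
  rw [card_torsionBy_inf_zmultiples hn hd hw, Nat.card_zmultiples, hw] at h
  refine Nat.eq_of_mul_eq_mul_right (Nat.pos_of_ne_zero hn) ?_
  rw [h]
  ring

lemma torsionBy_prod {H : Type*} [AddCommGroup H] (n : ℤ) :
    torsionBy (G × H) n = (torsionBy G n).prod (torsionBy H n) := by
  ext z
  simp only [mem_prod]
  simp [torsionBy, Prod.ext_iff]

lemma closure_torsion_union_image_nsmul_closure {a b k : ℕ} (h : b ∣ a * k) (x : G) :
    closure ({y | a • y = 0} ∪ (fun z => k • z) '' (closure ({y | b • y = 0} ∪ {x}) : Set G)) =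
      torsionBy G a ⊔ zmultiples (k • x) := by
  refine le_antisymm ((closure_le _).2 (Set.union_subset ?_ ?_)) (sup_le ?_ ?_)
  · exact fun y hy => mem_sup_left (torsionBy.nsmul_iff.2 hy)
  · rintro _ ⟨z, hz, rfl⟩
    suffices closure ({y | b • y = 0} ∪ {x}) ≤
        (torsionBy G a ⊔ zmultiples (k • x)).comap (DistribSMul.toAddMonoidHom G k) from
      this hz
    refine (closure_le _).2 (Set.union_subset (fun y hy => mem_sup_left ?_) ?_)
    · obtain ⟨c, hc⟩ := h
      rw [torsionBy.nsmul_iff, DistribSMul.toAddMonoidHom_apply, smul_smul,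
        hc, mul_nsmul, hy.out, smul_zero]
    · rintro _ rfl
      exact mem_sup_right (mem_zmultiples _)
  · exact fun y hy => subset_closure (Or.inl (torsionBy.nsmul_iff.1 hy))
  · exact zmultiples_le.2 (subset_closure (Or.inr ⟨x, subset_closure (Or.inr rfl), rfl⟩))

end AddSubgroup

open AddSubgroup

namespace ZMod

lemma zmultiples_one_eq_top (N : ℕ) : zmultiples (1 : ZMod N) = ⊤ :=
  (eq_top_iff' _).2 fun a => ⟨a.cast, by simp⟩

lemma torsionBy_eq_zmultiples {N n : ℕ} (hn : n ≠ 0) (hnN : n ∣ N) :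
    torsionBy (ZMod N) n = zmultiples ((N / n : ℕ) : ZMod N) := by
  rw [← inf_top_eq (torsionBy _ _), ← zmultiples_one_eq_top,
    torsionBy_inf_zmultiples hn (by rw [addOrderOf_one, Nat.mul_div_cancel' hnN]), nsmul_one]

lemma card_torsionBy {N n : ℕ} [NeZero N] (hnN : n ∣ N) : Nat.card (torsionBy (ZMod N) n) = n := by
  have hn : n ≠ 0 := by rintro rfl; exact NeZero.ne N (zero_dvd_iff.1 hnN)
  have hd : N / n ≠ 0 := (Nat.div_pos (Nat.le_of_dvd (NeZero.pos N) hnN) hn.bot_lt).ne'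
  rw [← inf_top_eq (torsionBy _ _), ← zmultiples_one_eq_top]
  exact card_torsionBy_inf_zmultiples hn hd (by rw [addOrderOf_one, Nat.mul_div_cancel' hnN])

lemma mul_eq_zero_of_pow_nsmul_eq_zero {p e j k : ℕ} (hp : p ≠ 0) (hjk : j + k ≤ e)
    {a b : ZMod (p ^ e)} (ha : p ^ j • a = 0) (hb : p ^ k • b = 0) : a * b = 0 := by
  have hzm (i : ℕ) (hi : i ≤ e) : torsionBy (ZMod (p ^ e)) (p ^ i : ℕ) =
      zmultiples ((p ^ (e - i) : ℕ) : ZMod (p ^ e)) := by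
    rw [torsionBy_eq_zmultiples (pow_ne_zero _ hp) (pow_dvd_pow p hi),
      Nat.pow_div hi (Nat.pos_of_ne_zero hp)]
  obtain ⟨i, rfl⟩ := mem_zmultiples_iff.1 (hzm j (by omega) ▸ torsionBy.nsmul_iff.2 ha)
  obtain ⟨i', rfl⟩ := mem_zmultiples_iff.1 (hzm k (by omega) ▸ torsionBy.nsmul_iff.2 hb)
  have h0 : ((p ^ (e - j) * p ^ (e - k) : ℕ) : ZMod (p ^ e)) = 0 := by
    rw [ZMod.natCast_eq_zero_iff, ← pow_add]
    exact pow_dvd_pow p (by omega)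
  push_cast at h0 ⊢
  rw [zsmul_eq_mul, zsmul_eq_mul]
  linear_combination (i * i' : ZMod (p ^ e)) * h0

lemma card_torsionBy_prod {N n : ℕ} [NeZero N] (hnN : n ∣ N) :
    Nat.card (torsionBy (ZMod N × ZMod N) n) = n ^ 2 := by
  rw [torsionBy_prod, Nat.card_congr (prodEquiv _ _).toEquiv, Nat.card_prod,
    card_torsionBy hnN, sq]

end ZMod

def symplecticForm {R : Type*} [CommRing R] (u v : R × R) : R := u.1 * v.2 - u.2 * v.1

lemma symplecticForm_eq_zero_of_mem_sup_zmultiples {R : Type*} [CommRing R]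
    {H : AddSubgroup (R × R)} {w : R × R}
    (hH : ∀ u ∈ H, ∀ v ∈ H, symplecticForm u v = 0) (hHw : ∀ u ∈ H, symplecticForm u w = 0) :
    ∀ u ∈ H ⊔ zmultiples w, ∀ v ∈ H ⊔ zmultiples w, symplecticForm u v = 0 := by
  simp only [mem_sup, mem_zmultiples_iff]
  rintro _ ⟨h, hh, _, ⟨a, rfl⟩, rfl⟩ _ ⟨h', hh', _, ⟨b, rfl⟩, rfl⟩
  have hhh' := hH h hh h' hh'
  have hhw := hHw h hh
  have hh'w := hHw h' hh'
  simp only [symplecticForm, Prod.fst_add, Prod.snd_add, Prod.smul_fst, Prod.smul_snd] at *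
  simp only [zsmul_eq_mul]
  linear_combination hhh' + (b : R) * hhw - (a : R) * hh'w

lemma symplecticForm_eq_zero_of_mem_torsionBy {p e j k : ℕ} (hp : p ≠ 0) (hjk : j + k ≤ e)
    {u v : ZMod (p ^ e) × ZMod (p ^ e)} (hu : p ^ j • u = 0) (hv : p ^ k • v = 0) :
    symplecticForm u v = 0 := by
  obtain ⟨hu₁, hu₂⟩ := Prod.ext_iff.1 hu
  obtain ⟨hv₁, hv₂⟩ := Prod.ext_iff.1 hv
  rw [symplecticForm, ZMod.mul_eq_zero_of_pow_nsmul_eq_zero hp hjk hu₁ hv₂,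
    ZMod.mul_eq_zero_of_pow_nsmul_eq_zero hp hjk hu₂ hv₁, sub_zero]

theorem sub_kernel_card_torsion_isotropic_general (p : ℕ) (hp : p.Prime) (e : ℕ)
    (m : ℕ) (hm : 2 * m ≤ e) (x : ZMod (p ^ e) × ZMod (p ^ e))
    (hx : addOrderOf x = p ^ (e - m))
    (K : AddSubgroup (ZMod (p ^ e) × ZMod (p ^ e)))
    (hK : K = AddSubgroup.closure
      ({y : ZMod (p ^ e) × ZMod (p ^ e) | p ^ m • y = 0} ∪ {x}))
    (r q : ℕ) (hr : r ≤ m) (hq : q ≤ e - 2 * m)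
    (K' : AddSubgroup (ZMod (p ^ e) × ZMod (p ^ e)))
    (hK' : K' = AddSubgroup.closure
      ({y : ZMod (p ^ e) × ZMod (p ^ e) | p ^ r • y = 0} ∪
        (fun z => p ^ (e - m - r - q) • z) '' (K : Set (ZMod (p ^ e) × ZMod (p ^ e))))) :
    Nat.card K' = p ^ (2 * r + q) ∧
    (∀ y ∈ K', p ^ (2 * r + q) • y = 0) ∧
    (∀ u ∈ K', ∀ v ∈ K', u.1 * v.2 - u.2 * v.1 = 0) := by
  have hp₀ : p ≠ 0 := hp.ne_zero
  have : NeZero (p ^ e) := ⟨pow_ne_zero e hp₀⟩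
  set w := p ^ (e - m - r - q) • x
  have hK'w : K' = torsionBy _ (p ^ r : ℕ) ⊔ zmultiples w := by
    rw [hK', hK]
    refine closure_torsion_union_image_nsmul_closure ?_ x
    rw [← pow_add]
    exact pow_dvd_pow p (by omega)
  have hw : addOrderOf w = p ^ r * p ^ q := by
    rw [addOrderOf_nsmul_of_dvd (pow_ne_zero _ hp₀) (hx ▸ pow_dvd_pow p (by omega)), hx,
      Nat.pow_div (by omega) hp.pos, ← pow_add]
    congr 1
    omega
  have hw₀ : p ^ (r + q) • w = 0 := by rw [pow_add, ← hw, addOrderOf_nsmul_eq_zero]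
  refine ⟨?_, fun y hy => torsionBy.nsmul_iff.1 ?_, ?_⟩
  · rw [hK'w, card_torsionBy_sup_zmultiples (pow_ne_zero _ hp₀) (pow_ne_zero _ hp₀) hw,
      ZMod.card_torsionBy_prod (pow_dvd_pow p (by omega)), ← pow_mul, ← pow_add, mul_comm]
  · rw [hK'w] at hy
    refine sup_le (torsionBy_natCast_mono (pow_dvd_pow p (by omega))) (zmultiples_le.2 ?_) hy
    rw [torsionBy.nsmul_iff, show 2 * r + q = r + (r + q) by omega, pow_add, mul_nsmul', hw₀,
      smul_zero]
  · rw [hK'w]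
    refine symplecticForm_eq_zero_of_mem_sup_zmultiples (fun u hu v hv => ?_) fun u hu => ?_
    · exact symplecticForm_eq_zero_of_mem_torsionBy hp₀ (by omega : r + r ≤ e)
        (torsionBy.nsmul_iff.1 hu) (torsionBy.nsmul_iff.1 hv)
    · exact symplecticForm_eq_zero_of_mem_torsionBy hp₀ (by omega : r + (r + q) ≤ e)
        (torsionBy.nsmul_iff.1 hu) hw₀

/-- Let `K ≤ M = (ℤ/p^eℤ)²` be the maximal isotropic subgroup generated by the
`p^m`-torsion subgroup together with an element `x` of additive order `p^(e-m)`
(where `2m ≤ e`). For `0 ≤ r ≤ m` and `0 ≤ q ≤ e - 2m`, the subgroup `K'` generated by the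
`p^r`-torsion subgroup together with `p^(e-m-r-q)·K` has cardinality `p^(2r+q)`, is contained
in the `p^(2r+q)`-torsion subgroup, and is isotropic for the standard symplectic pairing. -/
theorem sub_kernel_card_torsion_isotropic (p : ℕ) (hp : p.Prime) (e : ℕ) (he : 1 ≤ e)
    (m : ℕ) (hm : 2 * m ≤ e) (x : ZMod (p ^ e) × ZMod (p ^ e))
    (hx : addOrderOf x = p ^ (e - m))
    (K : AddSubgroup (ZMod (p ^ e) × ZMod (p ^ e)))
    (hK : K = AddSubgroup.closure
      ({y : ZMod (p ^ e) × ZMod (p ^ e) | p ^ m • y = 0} ∪ {x}))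
    (r q : ℕ) (hr : r ≤ m) (hq : q ≤ e - 2 * m)
    (K' : AddSubgroup (ZMod (p ^ e) × ZMod (p ^ e)))
    (hK' : K' = AddSubgroup.closure
      ({y : ZMod (p ^ e) × ZMod (p ^ e) | p ^ r • y = 0} ∪
        (fun z => p ^ (e - m - r - q) • z) '' (K : Set (ZMod (p ^ e) × ZMod (p ^ e))))) :
    Nat.card K' = p ^ (2 * r + q) ∧
    (∀ y ∈ K', p ^ (2 * r + q) • y = 0) ∧
    (∀ u ∈ K', ∀ v ∈ K', u.1 * v.2 - u.2 * v.1 = 0) :=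
  sub_kernel_card_torsion_isotropic_general p hp e m hm x hx K hK r q hr hq K' hK'
end

section
/- Let p be a prime number with p ≡ 1 (mod 4), and let F be a number field of degree 2 over ℚ containing an element α with α² = p. Then there exists a unit u of the ring of integers 𝒪_F whose norm N_{F/ℚ}(u) equals −1. -/
/-!
Let `(x, y)` be the fundamental solution of `x² - p y² = 1`. As `p ≡ 1 (mod 4)`, `x = 2k + 1` is
odd and `y = 2m` is even, so `k (k + 1) = p m²` with `k`, `k + 1` coprime. If `p ∣ k`, then
`k = p a²` and `k + 1 = c²`, and `(c, a)` is a solution with `1 < c < x`, contradicting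
minimality. Hence `k = a²`, `k + 1 = p b²`, i.e. `a² - p b² = -1`. The algebraic integer
`a + b √p` has minimal polynomial `(X - a)² - p b²` of degree `[F : ℚ]`, so its norm is
`a² - p b² = -1`, and an algebraic integer of norm `±1` is a unit.
-/

open Polynomial IntermediateField Module NumberField

namespace Algebra

variable {K L : Type*} [Field K] [Field L] [Algebra K L] [FiniteDimensional K L]

theorem norm_eq_coeff_zero_minpoly_of_natDegree_eq_finrank {x : L}
    (h : (minpoly K x).natDegree = finrank K L) :
    norm K x = (-1) ^ finrank K L * (minpoly K x).coeff 0 := by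
  have hx := _root_.IsIntegral.of_finite K x
  have hgen : finrank K⟮x⟯ L = 1 := by
    have htower := finrank_mul_finrank K K⟮x⟯ L
    rw [adjoin.finrank hx, h] at htower
    exact (Nat.mul_eq_left finrank_pos.ne').mp htower
  rw [norm_eq_norm_adjoin, hgen, pow_one, ← IntermediateField.adjoin.powerBasis_gen hx,
    PowerBasis.norm_gen_eq_coeff_zero_minpoly, IntermediateField.adjoin.powerBasis_gen hx,
    minpoly_gen, IntermediateField.adjoin.powerBasis_dim, h]

theorem norm_eq_sq_sub_of_sub_algebraMap_sq_eq (h2 : finrank K L = 2) {x : L}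
    (hx : x ∉ (algebraMap K L).range) {a c : K}
    (hxac : (x - algebraMap K L a) ^ 2 = algebraMap K L c) :
    norm K x = a ^ 2 - c := by
  set q : K[X] := (X - C a) ^ 2 - C c
  have hq_deg : q.natDegree = 2 := by
    rw [natDegree_sub_C, natDegree_pow, natDegree_X_sub_C]
  have hq_monic : q.Monic := ((monic_X_sub_C a).pow 2).sub_of_left <| by
    rw [degree_pow, degree_X_sub_C]
    exact degree_C_le.trans_lt (by norm_num)
  have hx_int := _root_.IsIntegral.of_finite K x
  have hmin : q = minpoly K x := by
    refine eq_of_monic_of_dvd_of_natDegree_le (minpoly.monic hx_int) hq_monic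
      (minpoly.dvd K x (by simp [q, hxac])) ?_
    rw [hq_deg]
    exact (minpoly.two_le_natDegree_iff hx_int).mpr hx
  rw [norm_eq_coeff_zero_minpoly_of_natDegree_eq_finrank (by rw [← hmin, hq_deg, h2]), ← hmin,
    h2, coeff_zero_eq_eval_zero]
  simp [q]

end Algebra

section NotRational

variable {K L : Type*} [Field K] [Field L] [Algebra K L]

theorem algebraMap_add_algebraMap_mul_notMem_range {α : L} (hα : α ∉ (algebraMap K L).range)
    {a b : K} (hb : b ≠ 0) :
    algebraMap K L a + algebraMap K L b * α ∉ (algebraMap K L).range := by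
  rintro ⟨r, hr⟩
  refine hα ⟨(r - a) / b, ?_⟩
  have hb' : algebraMap K L b ≠ 0 := (_root_.map_ne_zero _).mpr hb
  rw [map_div₀, map_sub, hr]
  field_simp
  ring

theorem notMem_range_of_sq_eq_natCast [CharZero L] {n : ℕ} (hn : ¬IsSquare n) {α : L}
    (hα : α ^ 2 = n) : α ∉ (algebraMap ℚ L).range := by
  rintro ⟨r, rfl⟩
  refine hn (Rat.isSquare_natCast_iff.mp ⟨r, ?_⟩)
  apply (algebraMap ℚ L).injective
  rw [map_natCast, map_mul, ← sq, hα]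

end NotRational

theorem odd_and_even_of_sq_sub_mul_sq_eq_one {x y d : ℤ} (hd : d % 4 = 1)
    (h : x ^ 2 - d * y ^ 2 = 1) : Odd x ∧ Even y := by
  obtain ⟨t, rfl⟩ : ∃ t, d = 4 * t + 1 := ⟨d / 4, by omega⟩
  rcases Int.even_or_odd x with ⟨k, rfl⟩ | ⟨k, rfl⟩ <;>
    rcases Int.even_or_odd y with ⟨m, rfl⟩ | ⟨m, rfl⟩
  -- every parity pattern except (odd, even) contradicts `h` modulo 4
  all_goals first
    | exact ⟨⟨k, rfl⟩, ⟨m, rfl⟩⟩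
    | ring_nf at h; omega

theorem Int.eq_sq_of_isCoprime_of_nonneg {a b c : ℤ} (h : IsCoprime a b) (ha : 0 ≤ a)
    (heq : a * b = c ^ 2) : ∃ d, a = d ^ 2 := by
  obtain ⟨d, rfl | rfl⟩ := Int.sq_of_isCoprime h heq
  · exact ⟨d, rfl⟩
  · exact ⟨0, by nlinarith [sq_nonneg d]⟩

theorem eq_mul_sq_and_eq_sq_of_dvd {p u v m : ℤ} (hp : 0 < p) (hu : 0 ≤ u) (hv : 0 ≤ v)
    (huv : IsCoprime u v) (h : u * v = p * m ^ 2) (hpu : p ∣ u) :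
    ∃ a c, u = p * a ^ 2 ∧ v = c ^ 2 := by
  obtain ⟨u', rfl⟩ := hpu
  have hu' : 0 ≤ u' := nonneg_of_mul_nonneg_right hu hp
  have h' : u' * v = m ^ 2 := mul_left_cancel₀ hp.ne' (by linear_combination h)
  have huv' : IsCoprime u' v := huv.of_mul_left_right
  obtain ⟨a, rfl⟩ := Int.eq_sq_of_isCoprime_of_nonneg huv' hu' h'
  obtain ⟨c, rfl⟩ := Int.eq_sq_of_isCoprime_of_nonneg huv'.symm hv (by rw [mul_comm, h'])
  exact ⟨a, c, rfl, rfl⟩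

theorem eq_mul_sq_and_eq_sq_or_eq_sq_and_eq_mul_sq {p u v m : ℤ} (hp : Prime p) (hp0 : 0 < p)
    (hu : 0 ≤ u) (hv : 0 ≤ v) (huv : IsCoprime u v) (h : u * v = p * m ^ 2) :
    (∃ a c, u = p * a ^ 2 ∧ v = c ^ 2) ∨ (∃ a c, u = a ^ 2 ∧ v = p * c ^ 2) := by
  rcases hp.dvd_mul.mp ⟨m ^ 2, h⟩ with hpu | hpv
  · exact .inl (eq_mul_sq_and_eq_sq_of_dvd hp0 hu hv huv h hpu)
  · obtain ⟨c, a, hv, hu⟩ :=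
      eq_mul_sq_and_eq_sq_of_dvd hp0 hv hu huv.symm (by rw [mul_comm, h]) hpv
    exact .inr ⟨a, c, hu, hv⟩

theorem exists_sq_sub_prime_mul_sq_eq_neg_one {p : ℕ} (hp : p.Prime) (hp4 : p % 4 = 1) :
    ∃ a b : ℤ, a ^ 2 - p * b ^ 2 = -1 := by
  have hpZ : Prime (p : ℤ) := Nat.prime_iff_prime_int.mp hp
  have hp0 : (0 : ℤ) < p := mod_cast hp.pos
  obtain ⟨s, hs⟩ := Pell.IsFundamental.exists_of_not_isSquare hp0 hpZ.not_isSquare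
  obtain ⟨⟨k, hk⟩, ⟨m, hm⟩⟩ := odd_and_even_of_sq_sub_mul_sq_eq_one (by omega) s.prop
  have hk0 : 0 < k := by linarith [hs.1]
  have hkm : k * (k + 1) = p * m ^ 2 := by
    have h4 : 4 * (k * (k + 1)) = 4 * (p * m ^ 2) := by
      have hxy := s.prop
      rw [hk, hm] at hxy
      linear_combination hxy
    omega
  rcases eq_mul_sq_and_eq_sq_or_eq_sq_and_eq_mul_sq hpZ hp0 hk0.le (by linarith)
    ⟨-1, 1, by ring⟩ hkm with ⟨a, c, hka, hkc⟩ | ⟨a, b, hka, hkb⟩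
  · exfalso
    have hc : 1 < |c| := by
      rw [← one_lt_sq_iff_one_lt_abs]
      linarith
    have hsc := hs.x_le_x
      (a := Pell.Solution₁.mk |c| a (by rw [sq_abs]; linear_combination hka - hkc)) (by simpa)
    rw [Pell.Solution₁.x_mk] at hsc
    nlinarith [Int.le_self_sq |c|, sq_abs c]
  · exact ⟨a, b, by linear_combination hkb - hka⟩

/-- If `p ≡ 1 (mod 4)` is prime and `F` is a quadratic number field containing a square root
of `p`, then the ring of integers of `F` has a unit of norm `-1`. -/
theorem exists_unit_norm_neg_one (p : ℕ) (hp : p.Prime) (hp4 : p % 4 = 1)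
    (F : Type*) [Field F] [NumberField F] (hdeg : Module.finrank ℚ F = 2)
    (α : F) (hα : α ^ 2 = (p : F)) :
    ∃ u : (NumberField.RingOfIntegers F)ˣ,
      Algebra.norm ℚ ((u : NumberField.RingOfIntegers F) : F) = -1 := by
  obtain ⟨a, b, hab⟩ := exists_sq_sub_prime_mul_sq_eq_neg_one hp hp4
  have hb : (b : ℚ) ≠ 0 := by
    intro hb
    rw [Int.cast_eq_zero.mp hb] at hab
    nlinarith [sq_nonneg a]
  let γ : 𝓞 F := ⟨α, IsIntegral.of_pow two_pos (hα ▸ isIntegral_natCast p)⟩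
  let β : 𝓞 F := a + b * γ
  have hβ : (β : F) = algebraMap ℚ F a + algebraMap ℚ F b * α := by
    simp only [β, γ, map_add, map_intCast]
    rfl
  have hβ_irrational : (β : F) ∉ (algebraMap ℚ F).range := hβ ▸
    algebraMap_add_algebraMap_mul_notMem_range
      (notMem_range_of_sq_eq_natCast hp.prime.not_isSquare hα) hb
  have hβ_sq : ((β : F) - algebraMap ℚ F a) ^ 2 = algebraMap ℚ F (p * b ^ 2) := by
    rw [hβ]
    simp only [add_sub_cancel_left, map_mul, map_pow, map_natCast, mul_pow, hα]
    ring
  have hnorm : Algebra.norm ℚ (β : F) = -1 := by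
    rw [Algebra.norm_eq_sq_sub_of_sub_algebraMap_sq_eq hdeg hβ_irrational hβ_sq]
    exact_mod_cast hab
  have hunit : IsUnit β := isUnit_iff_norm.mpr (by rw [RingOfIntegers.coe_norm, hnorm]; norm_num)
  exact ⟨hunit.unit, hnorm⟩
end
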